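/- arXiv:2209.01785 — 7 statements merged into one kernel-verified Lean document; each statement's English description precedes it below -/
import Mathlib

section
/- Let (Ω, 𝔄, μ) be a measure space with finite measure μ, let 𝕂 be ℝ or ℂ, let p, q ∈ (1, ∞) and let q' ∈ (1, ∞) satisfy 1/q + 1/q' = 1. Suppose k : Ω × Ω → 𝕂^{d×n} is μ⊗μ-measurable and M := (∫_Ω (∫_Ω |k(x,y)|^{q'} dμ(y))^{p/q'} dμ(x))^{1/p} < ∞ (Hille–Tamarkin condition). Then for every u ∈ L^q(Ω, 𝕂^n) the function 𝒦u defined by (𝒦u)(x) := ∫_Ω k(x,y) u(y) dμ(y) belongs to L^p(Ω, 𝕂^d), the map 𝒦 : L^q(Ω, 𝕂^n) → L^p(Ω, 𝕂^d) is a bounded linear operator, and its operator norm satisfies ‖𝒦‖ ≤ M. -/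
open MeasureTheory ENNReal

/-- Hille–Tamarkin kernels induce bounded Fredholm integral
operators `L^q → L^p`, Proposition B.1. -/
theorem stmt_0 {𝕂 : Type*} [RCLike 𝕂] {Ω : Type*} [MeasurableSpace Ω]
    (μ : Measure Ω) [IsFiniteMeasure μ] (d n : ℕ)
    (p q q' : ℝ) (hp : 1 < p) (hq : 1 < q) (hq' : 1 < q')
    (hconj : 1 / q + 1 / q' = 1)
    [Fact (1 ≤ ENNReal.ofReal p)] [Fact (1 ≤ ENNReal.ofReal q)]
    (k : Ω → Ω → EuclideanSpace 𝕂 (Fin n) →L[𝕂] EuclideanSpace 𝕂 (Fin d))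
    (hkmeas : StronglyMeasurable (Function.uncurry k))
    (M : ℝ≥0∞)
    (hM : M = (∫⁻ x, (∫⁻ y, (‖k x y‖₊ : ℝ≥0∞) ^ q' ∂μ) ^ (p / q') ∂μ) ^ (1 / p))
    (hMfin : M ≠ ⊤) :
    (∀ u : Ω → EuclideanSpace 𝕂 (Fin n), MemLp u (ENNReal.ofReal q) μ →
      MemLp (fun x => ∫ y, k x y (u y) ∂μ) (ENNReal.ofReal p) μ) ∧
    ∃ T : Lp (EuclideanSpace 𝕂 (Fin n)) (ENNReal.ofReal q) μ →L[𝕂]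
          Lp (EuclideanSpace 𝕂 (Fin d)) (ENNReal.ofReal p) μ,
      ‖T‖ ≤ M.toReal ∧
      ∀ u : Lp (EuclideanSpace 𝕂 (Fin n)) (ENNReal.ofReal q) μ,
        (T u : Ω → EuclideanSpace 𝕂 (Fin d)) =ᵐ[μ] fun x => ∫ y, k x y (u y) ∂μ := by
  have hp0 : (0:ℝ) < p := one_pos.trans hp
  have hq0 : (0:ℝ) < q := one_pos.trans hq
  have hq'0 : (0:ℝ) < q' := one_pos.trans hq'
  have hqq' : q.HolderConjugate q' := Real.holderConjugate_iff.mpr ⟨hq, by simpa [one_div] using hconj⟩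
  have hpne : ENNReal.ofReal p ≠ 0 := by
    simp [ENNReal.ofReal_eq_zero]; linarith
  have hqne : ENNReal.ofReal q ≠ 0 := by
    simp [ENNReal.ofReal_eq_zero]; linarith
  set E := EuclideanSpace 𝕂 (Fin n)
  set F := EuclideanSpace 𝕂 (Fin d)
  set A : Ω → ℝ≥0∞ := fun x => ∫⁻ y, (‖k x y‖₊ : ℝ≥0∞) ^ q' ∂μ with hA
  have hkm2 : Measurable (fun z : Ω × Ω => (‖k z.1 z.2‖₊ : ℝ≥0∞) ^ q') :=
    (hkmeas.measurable.enorm).pow_const q'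
  have hAmeas : Measurable A := hkm2.lintegral_prod_right'
  have hkx : ∀ x, StronglyMeasurable fun y => k x y :=
    fun x => hkmeas.comp_measurable measurable_prodMk_left
  -- M^p finite implies A x finite a.e.
  have hIfin : (∫⁻ x, A x ^ (p / q') ∂μ) ≠ ⊤ := by
    intro h
    rw [hM, h, ENNReal.top_rpow_of_pos (by positivity)] at hMfin
    exact hMfin rfl
  have hAfin : ∀ᵐ x ∂μ, A x ≠ ⊤ := by
    filter_upwards [ae_lt_top (hAmeas.pow_const _) hIfin] with x hx
    intro hxt
    rw [hxt, ENNReal.top_rpow_of_pos (by positivity)] at hx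
    exact (lt_irrefl _ hx).elim
  -- key pointwise Hölder bound
  have hbound : ∀ (u : Ω → E), AEStronglyMeasurable u μ → ∀ x,
      (∫⁻ y, (‖k x y (u y)‖₊ : ℝ≥0∞) ∂μ) ≤
        A x ^ (1 / q') * (∫⁻ y, (‖u y‖₊ : ℝ≥0∞) ^ q ∂μ) ^ (1 / q) := by
    intro u hu x
    calc (∫⁻ y, (‖k x y (u y)‖₊ : ℝ≥0∞) ∂μ)
        ≤ ∫⁻ y, (‖k x y‖₊ : ℝ≥0∞) * ‖u y‖₊ ∂μ := by
          refine lintegral_mono fun y => ?_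
          rw [← ENNReal.coe_mul]
          exact ENNReal.coe_le_coe.mpr ((k x y).le_opNNNorm (u y))
      _ ≤ A x ^ (1 / q') * (∫⁻ y, (‖u y‖₊ : ℝ≥0∞) ^ q ∂μ) ^ (1 / q) := by
          have := ENNReal.lintegral_mul_le_Lp_mul_Lq μ hqq'.symm
            ((hkx x).measurable.enorm.aemeasurable) hu.enorm
          simp only [one_div]
          simp at this
          exact this
  -- measurability of the output
  have houtmeas : ∀ (u : Ω → E), AEStronglyMeasurable u μ →
      AEStronglyMeasurable (fun z : Ω × Ω => k z.1 z.2 (u z.2)) (μ.prod μ) := by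
    intro u hu
    exact isBoundedBilinearMap_apply.continuous.comp_aestronglyMeasurable
      (hkmeas.aestronglyMeasurable.prodMk hu.comp_snd)
  -- norm of u in explicit form
  have hCeq : ∀ (u : Ω → E), eLpNorm u (ENNReal.ofReal q) μ
      = (∫⁻ y, (‖u y‖₊ : ℝ≥0∞) ^ q ∂μ) ^ (1 / q) := by
    intro u
    rw [eLpNorm_eq_lintegral_rpow_enorm_toReal hqne ENNReal.ofReal_ne_top,
      ENNReal.toReal_ofReal hq0.le]
    rfl
  -- main estimate
  have key : ∀ (u : Ω → E), MemLp u (ENNReal.ofReal q) μ →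
      MemLp (fun x => ∫ y, k x y (u y) ∂μ) (ENNReal.ofReal p) μ ∧
      eLpNorm (fun x => ∫ y, k x y (u y) ∂μ) (ENNReal.ofReal p) μ ≤
        M * eLpNorm u (ENNReal.ofReal q) μ := by
    intro u hu
    set C := eLpNorm u (ENNReal.ofReal q) μ with hCdef
    have hCfin : C ≠ ⊤ := hu.2.ne
    have hgmeas : AEStronglyMeasurable (fun x => ∫ y, k x y (u y) ∂μ) μ :=
      (houtmeas u hu.1).integral_prod_right'
    have hptw : ∀ x, (‖∫ y, k x y (u y) ∂μ‖₊ : ℝ≥0∞) ≤ A x ^ (1 / q') * C := by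
      intro x
      refine le_trans (enorm_integral_le_lintegral_enorm _) ?_
      rw [hCdef, hCeq u]
      exact hbound u hu.1 x
    have hsnorm : eLpNorm (fun x => ∫ y, k x y (u y) ∂μ) (ENNReal.ofReal p) μ ≤ M * C := by
      rw [eLpNorm_eq_lintegral_rpow_enorm_toReal hpne ENNReal.ofReal_ne_top,
        ENNReal.toReal_ofReal hp0.le]
      have step1 : (∫⁻ x, (‖∫ y, k x y (u y) ∂μ‖₊ : ℝ≥0∞) ^ p ∂μ)
          ≤ ∫⁻ x, A x ^ (p / q') * C ^ p ∂μ := by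
        refine lintegral_mono fun x => ?_
        calc (‖∫ y, k x y (u y) ∂μ‖₊ : ℝ≥0∞) ^ p
            ≤ (A x ^ (1 / q') * C) ^ p := by
              exact ENNReal.rpow_le_rpow (hptw x) hp0.le
          _ = A x ^ (p / q') * C ^ p := by
              rw [ENNReal.mul_rpow_of_nonneg _ _ hp0.le, ← ENNReal.rpow_mul]
              congr 2
              field_simp
      have step2 : (∫⁻ x, A x ^ (p / q') * C ^ p ∂μ)
          = (∫⁻ x, A x ^ (p / q') ∂μ) * C ^ p :=
        lintegral_mul_const' _ _ (ENNReal.rpow_ne_top_of_nonneg hp0.le hCfin)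
      calc (∫⁻ x, (‖∫ y, k x y (u y) ∂μ‖₊ : ℝ≥0∞) ^ p ∂μ) ^ (1 / p)
          ≤ ((∫⁻ x, A x ^ (p / q') ∂μ) * C ^ p) ^ (1 / p) := by
            rw [← step2]
            exact ENNReal.rpow_le_rpow step1 (by positivity)
        _ = M * C := by
            rw [ENNReal.mul_rpow_of_nonneg _ _ (by positivity : (0:ℝ) ≤ 1 / p), hM,
              ← ENNReal.rpow_mul, mul_one_div_cancel hp0.ne', ENNReal.rpow_one]
    refine ⟨⟨hgmeas, lt_of_le_of_lt hsnorm ?_⟩, hsnorm⟩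
    exact ENNReal.mul_lt_top hMfin.lt_top hCfin.lt_top
  -- a.e. integrability of sections
  have hint : ∀ (u : Ω → E), MemLp u (ENNReal.ofReal q) μ →
      ∀ᵐ x ∂μ, Integrable (fun y => k x y (u y)) μ := by
    intro u hu
    filter_upwards [(houtmeas u hu.1).prodMk_left, hAfin] with x hx hAx
    refine ⟨hx, ?_⟩
    refine lt_of_le_of_lt (hbound u hu.1 x) ?_
    refine ENNReal.mul_lt_top ?_ ?_
    · exact (ENNReal.rpow_ne_top_of_nonneg (by positivity) hAx).lt_top
    · rw [← hCeq u]
      exact hu.2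
  -- congruence of the operator under a.e. equality
  have hKcongr : ∀ (f g : Ω → E), f =ᵐ[μ] g →
      (fun x => ∫ y, k x y (f y) ∂μ) = fun x => ∫ y, k x y (g y) ∂μ := by
    intro f g hfg
    funext x
    exact integral_congr_ae (hfg.mono fun y hy => by simp [hy])
  -- the linear map
  let T₀ : Lp E (ENNReal.ofReal q) μ →ₗ[𝕂] Lp F (ENNReal.ofReal p) μ :=
  { toFun := fun u => (key u (Lp.memLp u)).1.toLp _
    map_add' := by
      intro u v
      have h1 : (fun x => ∫ y, k x y ((↑(u + v) : Ω → E) y) ∂μ)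
          = fun x => ∫ y, k x y ((↑u + ↑v : Ω → E) y) ∂μ :=
        hKcongr _ _ (Lp.coeFn_add u v)
      have h2 : (fun x => ∫ y, k x y ((↑u + ↑v : Ω → E) y) ∂μ)
          =ᵐ[μ] (fun x => ∫ y, k x y ((u : Ω → E) y) ∂μ)
            + fun x => ∫ y, k x y ((v : Ω → E) y) ∂μ := by
        filter_upwards [hint _ (Lp.memLp u), hint _ (Lp.memLp v)] with x hux hvx
        simp only [Pi.add_apply, map_add]
        exact integral_add hux hvx
      calc (key _ (Lp.memLp (u + v))).1.toLp _
          = ((key _ (Lp.memLp u)).1.add (key _ (Lp.memLp v)).1).toLp _ :=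
            MemLp.toLp_congr _ _ (h1 ▸ h2)
        _ = (key _ (Lp.memLp u)).1.toLp _ + (key _ (Lp.memLp v)).1.toLp _ :=
          MemLp.toLp_add (key _ (Lp.memLp u)).1 (key _ (Lp.memLp v)).1
    map_smul' := by
      intro c u
      have h1 : (fun x => ∫ y, k x y ((↑(c • u) : Ω → E) y) ∂μ)
          = fun x => ∫ y, k x y ((c • (u : Ω → E)) y) ∂μ :=
        hKcongr _ _ (Lp.coeFn_smul c u)
      have h2 : (fun x => ∫ y, k x y ((c • (u : Ω → E)) y) ∂μ)
          = c • fun x => ∫ y, k x y ((u : Ω → E) y) ∂μ := by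
        funext x
        simp only [Pi.smul_apply, ContinuousLinearMap.map_smul]
        exact integral_smul c _
      calc (key _ (Lp.memLp (c • u))).1.toLp _
          = ((key _ (Lp.memLp u)).1.const_smul c).toLp _ :=
            MemLp.toLp_congr _ _ (by rw [h1, h2])
        _ = c • (key _ (Lp.memLp u)).1.toLp _ := MemLp.toLp_const_smul c (key _ (Lp.memLp u)).1 }
  have hbnd : ∀ u : Lp E (ENNReal.ofReal q) μ, ‖T₀ u‖ ≤ M.toReal * ‖u‖ := by
    intro u
    have h1 : ‖T₀ u‖ = (eLpNorm (fun x => ∫ y, k x y ((u : Ω → E) y) ∂μ)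
        (ENNReal.ofReal p) μ).toReal := Lp.norm_toLp _ ((key _ (Lp.memLp u)).1)
    have h2 := (key _ (Lp.memLp u)).2
    rw [h1, Lp.norm_def, ← ENNReal.toReal_mul]
    exact ENNReal.toReal_mono
      (ENNReal.mul_ne_top hMfin (Lp.memLp u).2.ne) h2
  refine ⟨fun u hu => (key u hu).1, T₀.mkContinuous M.toReal hbnd, ?_, ?_⟩
  · exact T₀.mkContinuous_norm_le (ENNReal.toReal_nonneg) hbnd
  · intro u
    exact MemLp.coeFn_toLp ((key _ (Lp.memLp u)).1)
end

section
/- Let (Ω, 𝔄, μ) be a measure space with finite measure μ, let 𝕂 be ℝ or ℂ, let p, q ≥ 1, c ∈ L^q(Ω, ℝ) and c₀ ≥ 0. Suppose g : Ω × 𝕂^d → 𝕂^n satisfies the Carathéodory conditions (g(x,·) is continuous for μ-a.a. x ∈ Ω and g(·,z) is μ-measurable for every z ∈ 𝕂^d) and the growth estimate |g(x,z)| ≤ c(x) + c₀|z|^{p/q} for μ-a.a. x ∈ Ω and all z ∈ 𝕂^d. Then for every u ∈ L^p(Ω, 𝕂^d) the function 𝒢(u) defined by 𝒢(u)(x) :=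 g(x, u(x)) belongs to L^q(Ω, 𝕂^n) and satisfies ‖𝒢(u)‖_q ≤ ‖c‖_q + c₀ ‖u‖_p^{p/q}. -/
/-!
The Carathéodory conditions make `x ↦ g x (u x)` a.e. strongly measurable, and the growth
estimate dominates it pointwise by `c + c₀ ‖u‖ ^ (p / q)`. Minkowski's inequality bounds the
`L^q` norm of this majorant by `‖c‖_q + c₀ ‖‖u‖ ^ (p / q)‖_q`, and
`‖‖u‖ ^ (p / q)‖_q ^ q = ‖u‖_p ^ p`.
-/

open MeasureTheory TopologicalSpace

section Caratheodory

variable {Ω E F : Type*} [MeasurableSpace Ω] [TopologicalSpace E] [MetrizableSpace E]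
  [SecondCountableTopology E] [TopologicalSpace F] [PseudoMetrizableSpace F]
  {g : Ω → E → F} {u : Ω → E}

theorem stronglyMeasurable_comp_of_caratheodory (hgcont : ∀ x, Continuous (g x))
    (hgmeas : ∀ z, StronglyMeasurable fun x => g x z) (hu : StronglyMeasurable u) :
    StronglyMeasurable fun x => g x (u x) := by
  borelize E
  exact (stronglyMeasurable_uncurry_of_continuous_of_stronglyMeasurable hgcont hgmeas
    |>.comp_measurable (hu.measurable.prodMk measurable_id))

/-- Redefining `g x` to be `0` on a measurable null set containing the points where it is
discontinuous reduces this to `stronglyMeasurable_comp_of_caratheodory`. -/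
theorem aestronglyMeasurable_comp_of_caratheodory [Zero F] {μ : Measure Ω}
    (hgcont : ∀ᵐ x ∂μ, Continuous (g x)) (hgmeas : ∀ z, StronglyMeasurable fun x => g x z)
    (hu : AEStronglyMeasurable u μ) : AEStronglyMeasurable (fun x => g x (u x)) μ := by
  obtain ⟨N, hN_sub, hN_meas, hN_null⟩ := exists_measurable_superset_of_null (ae_iff.1 hgcont)
  let g' : Ω → E → F := fun x z => Nᶜ.indicator (fun y => g y z) x
  have hg'cont : ∀ x, Continuous (g' x) := by
    intro x
    by_cases hx : x ∈ N
    · simpa [g', hx] using continuous_const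
    · simpa [g', hx] using not_not.1 fun h => hx (hN_sub h)
  refine ⟨fun x => g' x (hu.mk u x), stronglyMeasurable_comp_of_caratheodory hg'cont
    (fun z => (hgmeas z).indicator hN_meas.compl) hu.stronglyMeasurable_mk, ?_⟩
  filter_upwards [measure_eq_zero_iff_ae_notMem.1 hN_null, hu.ae_eq_mk] with x hxN hxu
  simp [g', hxN, hxu]

end Caratheodory

namespace MeasureTheory

variable {α E : Type*} [MeasurableSpace α] {μ : Measure α} [NormedAddCommGroup E]

theorem lpNorm_mono_ae_real {p : ENNReal} {f : α → E} {g : α → ℝ} (hg : MemLp g p μ)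
    (h : ∀ᵐ x ∂μ, ‖f x‖ ≤ g x) : lpNorm f p μ ≤ lpNorm g p μ := by
  by_cases hf : AEStronglyMeasurable f μ
  · rw [← toReal_eLpNorm hf, ← toReal_eLpNorm hg.aestronglyMeasurable]
    exact ENNReal.toReal_mono hg.eLpNorm_ne_top (eLpNorm_mono_ae_real h)
  · simp [hf]

theorem integral_norm_rpow_rpow_one_div_eq_lpNorm {q : ℝ} (hq : 0 < q) {f : α → E}
    (hf : AEStronglyMeasurable f μ) :
    (∫ x, ‖f x‖ ^ q ∂μ) ^ (1 / q) = lpNorm f (ENNReal.ofReal q) μ := by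
  rw [lpNorm_eq_integral_norm_rpow_toReal (by simpa using hq) ENNReal.ofReal_ne_top hf,
    ENNReal.toReal_ofReal hq.le, one_div]

theorem integral_norm_rpow_rpow_one_div_eq_lpNorm_norm_rpow_div {p q : ℝ} (hq : 0 < q)
    {u : α → E} (hu : AEStronglyMeasurable u μ) :
    (∫ x, ‖u x‖ ^ p ∂μ) ^ (1 / q) = lpNorm (fun x => ‖u x‖ ^ (p / q)) (ENNReal.ofReal q) μ := by
  rw [← integral_norm_rpow_rpow_one_div_eq_lpNorm hq
    (hu.norm.aemeasurable.pow_const _).aestronglyMeasurable]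
  congr 1
  refine integral_congr_ae (.of_forall fun x => ?_)
  simp only [Real.norm_eq_abs, abs_of_nonneg (Real.rpow_nonneg (norm_nonneg (u x)) _),
    ← Real.rpow_mul (norm_nonneg (u x)), div_mul_cancel₀ _ hq.ne']

theorem MemLp.norm_rpow_div_ofReal {p q : ℝ} (hp : 0 < p) (hq : 0 < q) {u : α → E}
    (hu : MemLp u (ENNReal.ofReal p) μ) :
    MemLp (fun x => ‖u x‖ ^ (p / q)) (ENNReal.ofReal q) μ := by
  have hexp : ENNReal.ofReal p / ENNReal.ofReal (p / q) = ENNReal.ofReal q := by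
    rw [← ENNReal.ofReal_div_of_pos (by positivity), div_div_cancel₀ hp.ne']
  have := hu.norm_rpow_div (ENNReal.ofReal (p / q))
  rwa [hexp, ENNReal.toReal_ofReal (div_pos hp hq).le] at this

end MeasureTheory

theorem stmt_2_general {𝕂 : Type*} [RCLike 𝕂] {Ω : Type*} [MeasurableSpace Ω]
    (μ : Measure Ω) (d n : ℕ)
    (p q : ℝ) (hp : 1 ≤ p) (hq : 1 ≤ q)
    (c : Ω → ℝ) (hc : MemLp c (ENNReal.ofReal q) μ)
    (c₀ : ℝ) (hc₀ : 0 ≤ c₀)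
    (g : Ω → EuclideanSpace 𝕂 (Fin d) → EuclideanSpace 𝕂 (Fin n))
    (hgcont : ∀ᵐ x ∂μ, Continuous (g x))
    (hgmeas : ∀ z : EuclideanSpace 𝕂 (Fin d), StronglyMeasurable fun x => g x z)
    (hgrow : ∀ᵐ x ∂μ, ∀ z : EuclideanSpace 𝕂 (Fin d),
      ‖g x z‖ ≤ c x + c₀ * ‖z‖ ^ (p / q)) :
    ∀ u : Ω → EuclideanSpace 𝕂 (Fin d), MemLp u (ENNReal.ofReal p) μ →
      MemLp (fun x => g x (u x)) (ENNReal.ofReal q) μ ∧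
      (∫ x, ‖g x (u x)‖ ^ q ∂μ) ^ (1 / q) ≤
        (∫ x, |c x| ^ q ∂μ) ^ (1 / q) + c₀ * (∫ x, ‖u x‖ ^ p ∂μ) ^ (1 / q) := by
  intro u hu
  have hq₀ : 0 < q := by linarith
  set Q := ENNReal.ofReal q
  set v := fun x => ‖u x‖ ^ (p / q)
  have hv : MemLp v Q μ := hu.norm_rpow_div_ofReal (by linarith) hq₀
  have hmaj : MemLp (c + c₀ • v) Q μ := hc.add (hv.const_smul c₀)
  have hle : ∀ᵐ x ∂μ, ‖g x (u x)‖ ≤ (c + c₀ • v) x := hgrow.mono fun x hx => hx (u x)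
  have hG := aestronglyMeasurable_comp_of_caratheodory hgcont hgmeas hu.1
  refine ⟨hmaj.of_le hG (hle.mono fun x hx => hx.trans (le_abs_self _)), ?_⟩
  simp_rw [← Real.norm_eq_abs]
  rw [integral_norm_rpow_rpow_one_div_eq_lpNorm hq₀ hG,
    integral_norm_rpow_rpow_one_div_eq_lpNorm hq₀ hc.1,
    integral_norm_rpow_rpow_one_div_eq_lpNorm_norm_rpow_div hq₀ hu.1]
  calc lpNorm (fun x => g x (u x)) Q μ
      ≤ lpNorm (c + c₀ • v) Q μ := lpNorm_mono_ae_real hmaj hle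
    _ ≤ lpNorm c Q μ + lpNorm (c₀ • v) Q μ := lpNorm_add_le hc (by simpa [Q] using hq)
    _ = lpNorm c Q μ + c₀ * lpNorm v Q μ := by
        rw [lpNorm_const_smul, Real.nnnorm_of_nonneg hc₀]
        rfl

/-- well-definedness and boundedness of the Nemytskii operator,
Proposition B.2: under Carathéodory conditions and the growth estimate
`|g(x,z)| ≤ c(x) + c₀|z|^{p/q}`, the substitution operator maps `L^p` into `L^q`
with `‖𝒢(u)‖_q ≤ ‖c‖_q + c₀‖u‖_p^{p/q}`. -/
theorem stmt_2 {𝕂 : Type*} [RCLike 𝕂] {Ω : Type*} [MeasurableSpace Ω]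
    (μ : Measure Ω) [IsFiniteMeasure μ] (d n : ℕ)
    (p q : ℝ) (hp : 1 ≤ p) (hq : 1 ≤ q)
    (c : Ω → ℝ) (hc : MemLp c (ENNReal.ofReal q) μ)
    (c₀ : ℝ) (hc₀ : 0 ≤ c₀)
    (g : Ω → EuclideanSpace 𝕂 (Fin d) → EuclideanSpace 𝕂 (Fin n))
    (hgcont : ∀ᵐ x ∂μ, Continuous (g x))
    (hgmeas : ∀ z : EuclideanSpace 𝕂 (Fin d), StronglyMeasurable fun x => g x z)
    (hgrow : ∀ᵐ x ∂μ, ∀ z : EuclideanSpace 𝕂 (Fin d),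
      ‖g x z‖ ≤ c x + c₀ * ‖z‖ ^ (p / q)) :
    ∀ u : Ω → EuclideanSpace 𝕂 (Fin d), MemLp u (ENNReal.ofReal p) μ →
      MemLp (fun x => g x (u x)) (ENNReal.ofReal q) μ ∧
      (∫ x, ‖g x (u x)‖ ^ q ∂μ) ^ (1 / q) ≤
        (∫ x, |c x| ^ q ∂μ) ^ (1 / q) + c₀ * (∫ x, ‖u x‖ ^ p ∂μ) ^ (1 / q) :=
  stmt_2_general μ d n p q hp hq c hc c₀ hc₀ g hgcont hgmeas hgrow
end

section
/- Let (Ω, 𝔄, μ) be a measure space with finite measure μ, let 𝕂 be ℝ or ℂ, let p, q ≥ 1, c ∈ L^q(Ω, ℝ) and c₀ ≥ 0. Suppose g : Ω × 𝕂^d → 𝕂^n satisfies the Carathéodory conditions (g(x,·) is continuous for μ-a.a. x ∈ Ω and g(·,z) is μ-measurable for every z ∈ 𝕂^d) and the growth estimate |g(x,z)| ≤ c(x) + c₀|z|^{p/q} for μ-a.a. x ∈ Ω and all z ∈ 𝕂^d. Then the Nemytskii operator 𝒢 : L^p(Ω, 𝕂^d) → L^q(Ω, 𝕂^n), 𝒢(u)(x)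 := g(x, u(x)), is continuous with respect to the L^p and L^q norms. -/
/-! Along a sequence `v k → u` in `L^p`, the functions `‖v k‖^(p/q)` are uniformly integrable in
`L^q`, hence by the growth bound so are the `g(·, v k)`. Every subsequence of `v` has a further
subsequence converging a.e., along which `g(·, v k) → g(·, u)` a.e. by continuity of `g x`;
so `g(·, v k) → g(·, u)` in measure, and Vitali's convergence theorem upgrades this to `L^q`. -/

open MeasureTheory Filter Topology
open scoped ENNReal

namespace MeasureTheory

variable {α E F ι : Type*} [MeasurableSpace α] {μ : Measure α}

structure IsCaratheodory [TopologicalSpace E] [TopologicalSpace F] (g : α → E → F)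
    (μ : Measure α) : Prop where
  ae_continuous : ∀ᵐ x ∂μ, Continuous (g x)
  stronglyMeasurable : ∀ z, StronglyMeasurable fun x => g x z

def nemytskii (g : α → E → F) (u : α → E) : α → F := fun x => g x (u x)

section Measurability

variable [TopologicalSpace F] [AddCommMonoid F] [ContinuousAdd F] {g : α → E → F}

theorem stronglyMeasurable_nemytskii_simpleFunc (hg : ∀ z, StronglyMeasurable fun x => g x z)
    (s : SimpleFunc α E) : StronglyMeasurable (nemytskii g s) := by
  have hsum : nemytskii g s = fun x => ∑ z ∈ s.range, (s ⁻¹' {z}).indicator (g · z) x := by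
    funext x
    rw [Finset.sum_eq_single_of_mem (s x) (s.mem_range_self x)]
    · exact (Set.indicator_of_mem (by simp) _).symm
    · intro z _ hz
      exact Set.indicator_of_notMem (by simp [Ne.symm hz]) _
  rw [hsum]
  exact Finset.stronglyMeasurable_fun_sum _ fun z _ => (hg z).indicator (s.measurableSet_fiber z)

theorem IsCaratheodory.aestronglyMeasurable_nemytskii [TopologicalSpace E]
    [TopologicalSpace.PseudoMetrizableSpace F]
    (hg : IsCaratheodory g μ) {v : α → E} (hv : AEStronglyMeasurable v μ) :
    AEStronglyMeasurable (nemytskii g v) μ := by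
  obtain ⟨v', hv', hvv'⟩ := hv
  have hv'g : AEStronglyMeasurable (nemytskii g v') μ := by
    refine aestronglyMeasurable_of_tendsto_ae atTop
      (fun k => (stronglyMeasurable_nemytskii_simpleFunc hg.stronglyMeasurable
        (hv'.approx k)).aestronglyMeasurable) ?_
    filter_upwards [hg.ae_continuous] with x hx
    exact (hx.tendsto (v' x)).comp (hv'.tendsto_approx x)
  exact hv'g.congr (hvv'.mono fun x hx => by simp only [nemytskii, hx])

end Measurability

theorem IsCaratheodory.tendstoInMeasure_nemytskii [IsFiniteMeasure μ] [PseudoEMetricSpace E]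
    [PseudoEMetricSpace F] [AddCommMonoid F] [ContinuousAdd F] {g : α → E → F}
    (hg : IsCaratheodory g μ) {v : ℕ → α → E} {u : α → E} (hv : ∀ k, AEStronglyMeasurable (v k) μ)
    (hvu : TendstoInMeasure μ v atTop u) :
    TendstoInMeasure μ (fun k => nemytskii g (v k)) atTop (nemytskii g u) := by
  rw [exists_seq_tendstoInMeasure_atTop_iff fun k => hg.aestronglyMeasurable_nemytskii (hv k)]
  intro ns hns
  obtain ⟨ns', hns', hae⟩ := (exists_seq_tendstoInMeasure_atTop_iff hv).1 hvu ns hns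
  refine ⟨ns', hns', ?_⟩
  filter_upwards [hg.ae_continuous, hae] with x hgx hx
  exact (hgx.tendsto (u x)).comp hx

namespace UnifIntegrable

variable [NormedAddCommGroup E] [NormedAddCommGroup F] {p : ℝ≥0∞}

theorem mono {f : ι → α → E} {g : ι → α → F} (hf : UnifIntegrable f p μ)
    (hgf : ∀ i, ∀ᵐ x ∂μ, ‖g i x‖ ≤ ‖f i x‖) : UnifIntegrable g p μ := by
  intro ε hε
  obtain ⟨δ, hδ, hfδ⟩ := hf hε
  refine ⟨δ, hδ, fun i s hs hμs => (eLpNorm_mono_ae ?_).trans (hfδ i s hs hμs)⟩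
  filter_upwards [hgf i] with x hx
  by_cases hxs : x ∈ s <;> simp [hxs, hx]

theorem const_smul {𝕜 : Type*} [NormedRing 𝕜] [MulActionWithZero 𝕜 E] [IsBoundedSMul 𝕜 E]
    {f : ι → α → E} (hf : UnifIntegrable f p μ) (c : 𝕜) :
    UnifIntegrable (fun i => c • f i) p μ := by
  intro ε hε
  have hC : 0 < ‖c‖ + 1 := by positivity
  obtain ⟨δ, hδ, hfδ⟩ := hf (div_pos hε hC)
  refine ⟨δ, hδ, fun i s hs hμs => ?_⟩
  calc eLpNorm (s.indicator (c • f i)) p μ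
      = eLpNorm (c • s.indicator (f i)) p μ :=
        congrArg (eLpNorm · p μ) (Set.indicator_const_smul s c (f i))
    _ ≤ ‖c‖ₑ * ENNReal.ofReal (ε / (‖c‖ + 1)) :=
        eLpNorm_const_smul_le.trans (mul_le_mul_right (hfδ i s hs hμs) _)
    _ = ENNReal.ofReal (‖c‖ * (ε / (‖c‖ + 1))) := by
        rw [ENNReal.ofReal_mul (norm_nonneg c), ofReal_norm]
    _ ≤ ENNReal.ofReal ε := by
        refine ENNReal.ofReal_le_ofReal ?_
        rw [mul_div_assoc', div_le_iff₀ hC]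
        nlinarith

theorem norm_rpow {f : ι → α → E} {r : ℝ} (hr : 0 < r)
    (hf : UnifIntegrable f (p * ENNReal.ofReal r) μ) :
    UnifIntegrable (fun i x => ‖f i x‖ ^ r) p μ := by
  intro ε hε
  obtain ⟨δ, hδ, hfδ⟩ := hf (Real.rpow_pos_of_pos hε r⁻¹)
  refine ⟨δ, hδ, fun i s hs hμs => ?_⟩
  have hind : s.indicator (fun x => ‖f i x‖ ^ r) = fun x => ‖s.indicator (f i) x‖ ^ r := by
    funext x
    by_cases hxs : x ∈ s <;> simp [hxs, Real.zero_rpow hr.ne']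
  calc eLpNorm (s.indicator fun x => ‖f i x‖ ^ r) p μ
      = eLpNorm (s.indicator (f i)) (p * ENNReal.ofReal r) μ ^ r := by
        rw [hind, eLpNorm_norm_rpow _ hr]
    _ ≤ ENNReal.ofReal (ε ^ r⁻¹) ^ r := ENNReal.rpow_le_rpow (hfδ i s hs hμs) hr.le
    _ = ENNReal.ofReal ε := by
        rw [ENNReal.ofReal_rpow_of_pos (Real.rpow_pos_of_pos hε _), ← Real.rpow_mul hε.le,
          inv_mul_cancel₀ hr.ne', Real.rpow_one]

end UnifIntegrable

section Growth

variable [NormedAddCommGroup E] [NormedAddCommGroup F] {g : α → E → F} {c : α → ℝ} {c₀ r : ℝ}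
  {q : ℝ≥0∞}

theorem UnifIntegrable.nemytskii (hq : 1 ≤ q) (hq' : q ≠ ∞) (hr : 0 < r) (hc : MemLp c q μ)
    (hgrow : ∀ᵐ x ∂μ, ∀ z, ‖g x z‖ ≤ c x + c₀ * ‖z‖ ^ r) {v : ι → α → E}
    (hv : UnifIntegrable v (q * ENNReal.ofReal r) μ) (hvm : ∀ i, AEStronglyMeasurable (v i) μ) :
    UnifIntegrable (fun i => nemytskii g (v i)) q μ := by
  have hbound : UnifIntegrable (fun i x => c x + c₀ * ‖v i x‖ ^ r) q μ :=
    (unifIntegrable_const hq hq' hc).add ((hv.norm_rpow hr).const_smul c₀) hq (fun _ => hc.1)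
      fun i => ((Real.continuous_rpow_const hr.le).comp_aestronglyMeasurable
        (hvm i).norm).const_smul c₀
  refine hbound.mono fun i => ?_
  filter_upwards [hgrow] with x hx
  exact (hx (v i x)).trans (Real.le_norm_self _)

theorem MemLp.nemytskii (hr : 0 < r) (hc : MemLp c q μ)
    (hgrow : ∀ᵐ x ∂μ, ∀ z, ‖g x z‖ ≤ c x + c₀ * ‖z‖ ^ r) {u : α → E}
    (hu : MemLp u (q * ENNReal.ofReal r) μ) (hgu : AEStronglyMeasurable (nemytskii g u) μ) :
    MemLp (nemytskii g u) q μ := by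
  have hur : MemLp (fun x => ‖u x‖ ^ r) q μ := by
    simpa [ENNReal.mul_div_cancel_right (ENNReal.ofReal_pos.2 hr).ne' ENNReal.ofReal_ne_top,
      hr.le] using hu.norm_rpow_div (ENNReal.ofReal r)
  refine (hc.add (hur.const_mul c₀)).of_le hgu ?_
  filter_upwards [hgrow] with x hx
  exact (hx (u x)).trans (Real.le_norm_self _)

theorem IsCaratheodory.tendsto_eLpNorm_nemytskii_sub [IsFiniteMeasure μ] {p : ℝ≥0∞}
    (hg : IsCaratheodory g μ) (hp : 1 ≤ p) (hq : 1 ≤ q) (hq' : q ≠ ∞) (hr : 0 < r)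
    (hpqr : q * ENNReal.ofReal r = p) (hc : MemLp c q μ)
    (hgrow : ∀ᵐ x ∂μ, ∀ z, ‖g x z‖ ≤ c x + c₀ * ‖z‖ ^ r) {v : ℕ → α → E} {u : α → E}
    (hv : ∀ k, MemLp (v k) p μ) (hu : MemLp u p μ)
    (hvu : Tendsto (fun k => eLpNorm (v k - u) p μ) atTop (𝓝 0)) :
    Tendsto (fun k => eLpNorm (nemytskii g (v k) - nemytskii g u) q μ) atTop (𝓝 0) := by
  subst hpqr
  have hp' : q * ENNReal.ofReal r ≠ ∞ := ENNReal.mul_ne_top hq' ENNReal.ofReal_ne_top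
  have hvm : ∀ k, AEStronglyMeasurable (v k) μ := fun k => (hv k).1
  exact tendsto_Lp_finite_of_tendstoInMeasure hq hq'
    (fun k => hg.aestronglyMeasurable_nemytskii (hvm k))
    (.nemytskii hr hc hgrow hu (hg.aestronglyMeasurable_nemytskii hu.1))
    ((unifIntegrable_of_tendsto_Lp hp hp' hv hu hvu).nemytskii hq hq' hr hc hgrow hvm)
    (hg.tendstoInMeasure_nemytskii hvm
      (tendstoInMeasure_of_tendsto_eLpNorm (by positivity) hvm hu.1 hvu))

end Growth

end MeasureTheory

theorem exists_pos_forall_lt_of_tendsto_seq {β : Type*} {P : β → Prop} {D G : β → ℝ≥0∞}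
    (h : ∀ v : ℕ → β, (∀ k, P (v k)) → Tendsto (fun k => D (v k)) atTop (𝓝 0) →
      Tendsto (fun k => G (v k)) atTop (𝓝 0))
    {ε : ℝ} (hε : 0 < ε) :
    ∃ δ : ℝ, 0 < δ ∧ ∀ b, P b → D b < ENNReal.ofReal δ → G b < ENNReal.ofReal ε := by
  by_contra! hcon
  choose v hvP hvD hvG using fun k : ℕ => hcon (1 / ((k : ℝ) + 1)) (by positivity)
  have hD : Tendsto (fun k => D (v k)) atTop (𝓝 0) := by
    have h0 : Tendsto (fun k : ℕ => ENNReal.ofReal (1 / ((k : ℝ) + 1))) atTop (𝓝 0) := by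
      simpa using ENNReal.tendsto_ofReal tendsto_one_div_add_atTop_nhds_zero_nat
    exact tendsto_of_tendsto_of_tendsto_of_le_of_le tendsto_const_nhds h0 (fun _ => zero_le)
      fun k => (hvD k).le
  obtain ⟨k, hk⟩ :=
    ((h v hvP hD).eventually_lt_const (ENNReal.ofReal_pos.2 hε)).exists
  exact (hvG k).not_gt hk

theorem stmt_3_general {𝕂 : Type*} [RCLike 𝕂] {Ω : Type*} [MeasurableSpace Ω]
    (μ : Measure Ω) [IsFiniteMeasure μ] (d n : ℕ)
    (p q : ℝ) (hp : 1 ≤ p) (hq : 1 ≤ q)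
    (c : Ω → ℝ) (hc : MemLp c (ENNReal.ofReal q) μ)
    (c₀ : ℝ)
    (g : Ω → EuclideanSpace 𝕂 (Fin d) → EuclideanSpace 𝕂 (Fin n))
    (hgcont : ∀ᵐ x ∂μ, Continuous (g x))
    (hgmeas : ∀ z : EuclideanSpace 𝕂 (Fin d), StronglyMeasurable fun x => g x z)
    (hgrow : ∀ᵐ x ∂μ, ∀ z : EuclideanSpace 𝕂 (Fin d),
      ‖g x z‖ ≤ c x + c₀ * ‖z‖ ^ (p / q)) :
    ∀ u : Ω → EuclideanSpace 𝕂 (Fin d), MemLp u (ENNReal.ofReal p) μ →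
      ∀ ε : ℝ, 0 < ε → ∃ δ : ℝ, 0 < δ ∧
        ∀ v : Ω → EuclideanSpace 𝕂 (Fin d), MemLp v (ENNReal.ofReal p) μ →
          eLpNorm (u - v) (ENNReal.ofReal p) μ < ENNReal.ofReal δ →
          eLpNorm ((fun x => g x (u x)) - fun x => g x (v x)) (ENNReal.ofReal q) μ <
            ENNReal.ofReal ε := by
  intro u hu ε hε
  have hpq : ENNReal.ofReal q * ENNReal.ofReal (p / q) = ENNReal.ofReal p := by
    rw [← ENNReal.ofReal_mul (by linarith)]
    congr 1
    field_simp
  refine exists_pos_forall_lt_of_tendsto_seq (P := fun v => MemLp v (ENNReal.ofReal p) μ)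
    (fun v hv hvu => ?_) hε
  simp_rw [eLpNorm_sub_comm u, eLpNorm_sub_comm (fun x => g x (u x))] at hvu ⊢
  exact IsCaratheodory.tendsto_eLpNorm_nemytskii_sub ⟨hgcont, hgmeas⟩ (ENNReal.one_le_ofReal.2 hp)
    (ENNReal.one_le_ofReal.2 hq) ENNReal.ofReal_ne_top (by positivity) hpq hc hgrow hv hu hvu

/-- continuity of the Nemytskii operator `𝒢 : L^p → L^q`,
Proposition B.2: under Carathéodory conditions and the growth estimate
`|g(x,z)| ≤ c(x) + c₀|z|^{p/q}`, the substitution operator `u ↦ g(·, u(·))`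
is continuous from `L^p(Ω, 𝕂^d)` to `L^q(Ω, 𝕂^n)`. -/
theorem stmt_3 {𝕂 : Type*} [RCLike 𝕂] {Ω : Type*} [MeasurableSpace Ω]
    (μ : Measure Ω) [IsFiniteMeasure μ] (d n : ℕ)
    (p q : ℝ) (hp : 1 ≤ p) (hq : 1 ≤ q)
    (c : Ω → ℝ) (hc : MemLp c (ENNReal.ofReal q) μ)
    (c₀ : ℝ) (hc₀ : 0 ≤ c₀)
    (g : Ω → EuclideanSpace 𝕂 (Fin d) → EuclideanSpace 𝕂 (Fin n))
    (hgcont : ∀ᵐ x ∂μ, Continuous (g x))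
    (hgmeas : ∀ z : EuclideanSpace 𝕂 (Fin d), StronglyMeasurable fun x => g x z)
    (hgrow : ∀ᵐ x ∂μ, ∀ z : EuclideanSpace 𝕂 (Fin d),
      ‖g x z‖ ≤ c x + c₀ * ‖z‖ ^ (p / q)) :
    ∀ u : Ω → EuclideanSpace 𝕂 (Fin d), MemLp u (ENNReal.ofReal p) μ →
      ∀ ε : ℝ, 0 < ε → ∃ δ : ℝ, 0 < δ ∧
        ∀ v : Ω → EuclideanSpace 𝕂 (Fin d), MemLp v (ENNReal.ofReal p) μ →
          eLpNorm (u - v) (ENNReal.ofReal p) μ < ENNReal.ofReal δ →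
          eLpNorm ((fun x => g x (u x)) - fun x => g x (v x)) (ENNReal.ofReal q) μ <
            ENNReal.ofReal ε :=
  stmt_3_general μ d n p q hp hq c hc c₀ g hgcont hgmeas hgrow
end

section
/- Let l > 0, Ω := (−l/2, l/2), δ > 0, and let p, q ∈ (1, ∞) with q' defined by 1/q + 1/q' = 1. Consider the Laplace kernel k(x,y) := (δ/2) e^{−δ|x−y|} and, for u ∈ L^q(Ω), the function (𝒦u)(x) := ∫_Ω k(x,y) u(y) dy. Then for every x ∈ Ω the function 𝒦u is differentiable at x with derivative (𝒦u)'(x) = −(δ²/2) ∫_Ω sgn(x−y) e^{−δ|x−y|} u(y) dy, and this derivative satisfies ‖(𝒦u)'‖_p ≤ (δ²/2) l^{1/p + 1/q'} ‖u‖_q. In particular, 𝒦u belongs to the Sobolev space W^{1,p}(Ω). -/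
open MeasureTheory Set Filter

/-!
Off the diagonal the kernel `t ↦ (δ/2) e^{-δ|t|}` is differentiable, and everywhere it is
bounded and `δ²/2`-Lipschitz. Since the diagonal `y = x` is a null set, differentiation under
the integral sign applies, with dominating function `(δ²/2)|u|`, integrable because `Ω` has
finite measure. The derivative is then bounded pointwise by
`(δ²/2)‖u‖₁ ≤ (δ²/2) l^{1/q'} ‖u‖_q` (Hölder against `1`), and a function bounded by `B` on `Ω`
has `L^p` norm at most `l^{1/p} B`.
-/

noncomputable def laplaceKernel (δ t : ℝ) : ℝ := δ / 2 * Real.exp (-δ * |t|)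

/-- The derivative of `laplaceKernel δ` away from `0`. -/
noncomputable def laplaceKernelDeriv (δ t : ℝ) : ℝ :=
  -(δ ^ 2 / 2) * Real.sign t * Real.exp (-δ * |t|)

theorem Real.sign_eq_coe_sign (t : ℝ) : Real.sign t = (SignType.sign t : ℝ) := by
  rcases lt_trichotomy t 0 with h | rfl | h
  · simp [Real.sign_of_neg h, _root_.sign_neg h]
  · simp [Real.sign_zero]
  · simp [Real.sign_of_pos h, _root_.sign_pos h]

@[fun_prop]
theorem Real.measurable_sign : Measurable Real.sign :=
  Measurable.ite measurableSet_Iio measurable_const <|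
    Measurable.ite measurableSet_Ioi measurable_const measurable_const

theorem Real.abs_sign_le_one (t : ℝ) : |Real.sign t| ≤ 1 := by
  rcases Real.sign_apply_eq t with h | h | h <;> simp [h]

theorem abs_exp_neg_mul_sub_exp_neg_mul_le {δ a b : ℝ} (hδ : 0 ≤ δ) (ha : 0 ≤ a)
    (hb : 0 ≤ b) :
    |Real.exp (-δ * a) - Real.exp (-δ * b)| ≤ δ * |a - b| := by
  wlog hba : b ≤ a generalizing a b
  · rw [abs_sub_comm, abs_sub_comm a]
    exact this hb ha (le_of_not_ge hba)
  have hexp_b : Real.exp (-δ * b) ≤ 1 := Real.exp_le_one_iff.2 (by nlinarith)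
  have hsplit : Real.exp (-δ * a) = Real.exp (-δ * b) * Real.exp (-(δ * (a - b))) := by
    rw [← Real.exp_add]; ring_nf
  have hlin := Real.add_one_le_exp (-(δ * (a - b)))
  have hmono : Real.exp (-(δ * (a - b))) ≤ 1 := Real.exp_le_one_iff.2 (by nlinarith)
  rw [abs_of_nonpos (by rw [hsplit]; nlinarith [Real.exp_pos (-δ * b)]),
    abs_of_nonneg (sub_nonneg.2 hba), hsplit]
  nlinarith [Real.exp_pos (-δ * b)]

section Laplace

variable {δ : ℝ}

theorem exp_neg_mul_abs_le_one (hδ : 0 ≤ δ) (t : ℝ) : Real.exp (-δ * |t|) ≤ 1 :=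
  Real.exp_le_one_iff.2 (by nlinarith [abs_nonneg t])

theorem abs_laplaceKernel_le (hδ : 0 ≤ δ) (t : ℝ) : |laplaceKernel δ t| ≤ δ / 2 := by
  rw [laplaceKernel, abs_of_nonneg (by positivity)]
  calc δ / 2 * Real.exp (-δ * |t|) ≤ δ / 2 * 1 := by gcongr; exact exp_neg_mul_abs_le_one hδ t
    _ = δ / 2 := mul_one _

theorem abs_laplaceKernelDeriv_le (hδ : 0 ≤ δ) (t : ℝ) :
    |laplaceKernelDeriv δ t| ≤ δ ^ 2 / 2 := by
  rw [laplaceKernelDeriv, abs_mul, abs_mul, abs_neg,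
    abs_of_nonneg (by positivity : 0 ≤ δ ^ 2 / 2), abs_of_pos (Real.exp_pos _)]
  calc δ ^ 2 / 2 * |Real.sign t| * Real.exp (-δ * |t|) ≤ δ ^ 2 / 2 * 1 * 1 := by
        gcongr
        exacts [Real.abs_sign_le_one t, exp_neg_mul_abs_le_one hδ t]
    _ = δ ^ 2 / 2 := by ring

theorem lipschitzWith_laplaceKernel (hδ : 0 ≤ δ) :
    LipschitzWith (Real.toNNReal (δ ^ 2 / 2)) (laplaceKernel δ) :=
  LipschitzWith.of_dist_le_mul fun a b => by
    rw [Real.dist_eq, Real.dist_eq, Real.coe_toNNReal _ (by positivity), laplaceKernel,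
      laplaceKernel, ← mul_sub, abs_mul, abs_of_nonneg (by positivity : 0 ≤ δ / 2)]
    calc δ / 2 * |Real.exp (-δ * |a|) - Real.exp (-δ * |b|)|
        ≤ δ / 2 * (δ * |a - b|) := by
          gcongr
          exact (abs_exp_neg_mul_sub_exp_neg_mul_le hδ (abs_nonneg a) (abs_nonneg b)).trans
            (mul_le_mul_of_nonneg_left (abs_abs_sub_abs_le_abs_sub a b) hδ)
      _ = δ ^ 2 / 2 * |a - b| := by ring

theorem hasDerivAt_laplaceKernel {t : ℝ} (ht : t ≠ 0) :
    HasDerivAt (laplaceKernel δ) (laplaceKernelDeriv δ t) t := by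
  refine ((((hasDerivAt_abs ht).const_mul (-δ)).exp).const_mul (δ / 2)).congr_deriv ?_
  rw [laplaceKernelDeriv, Real.sign_eq_coe_sign]
  ring

theorem measurable_laplaceKernelDeriv : Measurable (laplaceKernelDeriv δ) := by
  unfold laplaceKernelDeriv
  fun_prop

end Laplace

section KernelIntegral

variable {E : Type*} [NormedAddCommGroup E] [NormedSpace ℝ E] {μ : Measure ℝ} {u : ℝ → E}
  {k k' : ℝ → ℝ} {C : ℝ}

theorem integrable_kernel_smul (hk : Measurable k) (hkC : ∀ t, |k t| ≤ C)
    (hu : Integrable u μ) (x : ℝ) : Integrable (fun y => k (x - y) • u y) μ :=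
  hu.bdd_smul C (hk.comp (measurable_const_sub x)).aestronglyMeasurable
    (Eventually.of_forall fun _ => hkC _)

theorem norm_integral_kernel_smul_le (hkC : ∀ t, |k t| ≤ C) (hu : Integrable u μ) (x : ℝ) :
    ‖∫ y, k (x - y) • u y ∂μ‖ ≤ C * ∫ y, ‖u y‖ ∂μ := by
  rw [← integral_const_mul]
  refine norm_integral_le_of_norm_le (hu.norm.const_mul C) (Eventually.of_forall fun y => ?_)
  rw [norm_smul, Real.norm_eq_abs]
  exact mul_le_mul_of_nonneg_right (hkC _) (norm_nonneg _)

theorem lipschitzWith_kernel_smul {K : NNReal} (hk : LipschitzWith K k) (y : ℝ) (v : E) :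
    LipschitzWith (K * ‖v‖₊) fun x => k (x - y) • v :=
  LipschitzWith.of_dist_le_mul fun a b => by
    rw [dist_eq_norm, ← sub_smul, norm_smul, NNReal.coe_mul, coe_nnnorm, mul_right_comm,
      ← dist_eq_norm, ← dist_sub_right a b y]
    exact mul_le_mul_of_nonneg_right (hk.dist_le_mul _ _) (norm_nonneg v)

theorem hasDerivAt_integral_kernel_smul [NullSingletonClass μ] {K : NNReal}
    (hk : LipschitzWith K k) (hkC : ∀ t, |k t| ≤ C) (hk' : ∀ t ≠ 0, HasDerivAt k (k' t) t)
    (hk'_meas : Measurable k') (hu : Integrable u μ) (x : ℝ) :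
    HasDerivAt (fun x' => ∫ y, k (x' - y) • u y ∂μ) (∫ y, k' (x - y) • u y ∂μ) x := by
  have hk_meas : Measurable k := hk.continuous.measurable
  refine (hasDerivAt_integral_of_dominated_loc_of_lip (bound := fun y => K * ‖u y‖) univ_mem
    (Eventually.of_forall fun x' => (integrable_kernel_smul hk_meas hkC hu x').1)
    (integrable_kernel_smul hk_meas hkC hu x)
    ((hk'_meas.comp (measurable_const_sub x)).aestronglyMeasurable.smul hu.1)
    (Eventually.of_forall fun y => ?_) (hu.norm.const_mul K) ?_).2
  · rw [show Real.nnabs (K * ‖u y‖) = K * ‖u y‖₊ by ext; simp]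
    exact (lipschitzWith_kernel_smul hk y (u y)).lipschitzOnWith
  · filter_upwards [Measure.ae_ne μ x] with y hy
    simpa using
      ((hk' _ (sub_ne_zero.2 hy.symm)).comp x ((hasDerivAt_id x).sub_const y)).smul_const (u y)

end KernelIntegral

section FiniteMeasure

variable {α E : Type*} [MeasurableSpace α] {μ : Measure α} [IsFiniteMeasure μ]
  [NormedAddCommGroup E]

theorem integral_norm_le_of_memLp {q q' : ℝ} (hqq' : q.HolderConjugate q') {u : α → E}
    (hu : MemLp u (ENNReal.ofReal q) μ) :
    ∫ y, ‖u y‖ ∂μ ≤ (∫ y, ‖u y‖ ^ q ∂μ) ^ (1 / q) * μ.real univ ^ (1 / q') := by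
  simpa using integral_mul_norm_le_Lp_mul_Lq hqq' hu.norm (memLp_const (1 : ℝ))

theorem integral_norm_rpow_rpow_le {p B : ℝ} (hp : 0 < p) (hB : 0 ≤ B) {g : α → E}
    (hg : ∀ x, ‖g x‖ ≤ B) :
    (∫ x, ‖g x‖ ^ p ∂μ) ^ (1 / p) ≤ μ.real univ ^ (1 / p) * B := by
  have hint : ∫ x, ‖g x‖ ^ p ∂μ ≤ ∫ _, B ^ p ∂μ :=
    integral_mono_of_nonneg (Eventually.of_forall fun x => by positivity) (integrable_const _)
      (Eventually.of_forall fun x => Real.rpow_le_rpow (norm_nonneg _) (hg x) hp.le)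
  calc (∫ x, ‖g x‖ ^ p ∂μ) ^ (1 / p) ≤ (μ.real univ * B ^ p) ^ (1 / p) := by
        rw [integral_const, smul_eq_mul] at hint
        gcongr
    _ = μ.real univ ^ (1 / p) * B := by
        rw [Real.mul_rpow (by positivity) (by positivity), ← Real.rpow_mul hB,
          mul_one_div_cancel hp.ne', Real.rpow_one]

end FiniteMeasure

theorem stronglyMeasurable_of_forall_hasDerivAt {F : Type*} [NormedAddCommGroup F]
    [NormedSpace ℝ F] [CompleteSpace F] {f f' : ℝ → F} (h : ∀ x, HasDerivAt f (f' x) x) :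
    StronglyMeasurable f' := by
  rw [show f' = deriv f from funext fun x => (h x).deriv.symm]
  exact stronglyMeasurable_deriv f

theorem stmt_11_general {𝕂 : Type*} [RCLike 𝕂] (l δ p q q' : ℝ) (hl : 0 < l) (hδ : 0 < δ)
    (hp : 1 < p) (hq : 1 < q) (hconj : 1 / q + 1 / q' = 1)
    (u : ℝ → 𝕂)
    (hu : MemLp u (ENNReal.ofReal q) (volume.restrict (Set.Ioo (-(l / 2)) (l / 2)))) :
    (∀ x ∈ Set.Ioo (-(l / 2)) (l / 2),
      HasDerivAt
        (fun x' => ∫ y in Set.Ioo (-(l / 2)) (l / 2),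
          (δ / 2 * Real.exp (-δ * |x' - y|)) • u y)
        (∫ y in Set.Ioo (-(l / 2)) (l / 2),
          (-(δ ^ 2 / 2) * Real.sign (x - y) * Real.exp (-δ * |x - y|)) • u y) x) ∧
    (∫ x in Set.Ioo (-(l / 2)) (l / 2),
        ‖∫ y in Set.Ioo (-(l / 2)) (l / 2),
          (-(δ ^ 2 / 2) * Real.sign (x - y) * Real.exp (-δ * |x - y|)) • u y‖ ^ p) ^
        (1 / p) ≤
      δ ^ 2 / 2 * l ^ (1 / p + 1 / q') *
        (∫ y in Set.Ioo (-(l / 2)) (l / 2), ‖u y‖ ^ q) ^ (1 / q) ∧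
    MemLp (fun x => ∫ y in Set.Ioo (-(l / 2)) (l / 2),
        (δ / 2 * Real.exp (-δ * |x - y|)) • u y)
      (ENNReal.ofReal p) (volume.restrict (Set.Ioo (-(l / 2)) (l / 2))) ∧
    MemLp (fun x => ∫ y in Set.Ioo (-(l / 2)) (l / 2),
        (-(δ ^ 2 / 2) * Real.sign (x - y) * Real.exp (-δ * |x - y|)) • u y)
      (ENNReal.ofReal p) (volume.restrict (Set.Ioo (-(l / 2)) (l / 2))) := by
  set μ := volume.restrict (Ioo (-(l / 2)) (l / 2))
  have hμ : μ.real univ = l := by simp [μ, hl.le]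
  have hu1 : Integrable u μ := hu.integrable (by simpa using hq.le)
  have hqq' : q.HolderConjugate q' := Real.holderConjugate_iff.2 ⟨hq, by simpa using hconj⟩
  have hderiv : ∀ x, HasDerivAt (fun x' => ∫ y, laplaceKernel δ (x' - y) • u y ∂μ)
      (∫ y, laplaceKernelDeriv δ (x - y) • u y ∂μ) x :=
    hasDerivAt_integral_kernel_smul (lipschitzWith_laplaceKernel hδ.le)
      (abs_laplaceKernel_le hδ.le) (fun _ => hasDerivAt_laplaceKernel)
      measurable_laplaceKernelDeriv hu1
  have hbound : ∀ x, ‖∫ y, laplaceKernelDeriv δ (x - y) • u y ∂μ‖ ≤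
      δ ^ 2 / 2 * ((∫ y, ‖u y‖ ^ q ∂μ) ^ (1 / q) * l ^ (1 / q')) := fun x =>
    (norm_integral_kernel_smul_le (abs_laplaceKernelDeriv_le hδ.le) hu1 x).trans <|
      mul_le_mul_of_nonneg_left (hμ ▸ integral_norm_le_of_memLp hqq' hu) (by positivity)
  refine ⟨fun x _ => hderiv x, ?_, ?_, ?_⟩
  · refine (integral_norm_rpow_rpow_le (by linarith) (by positivity) hbound).trans_eq ?_
    rw [hμ, Real.rpow_add hl]
    ring
  · exact MemLp.of_bound
      (continuous_iff_continuousAt.2 fun x => (hderiv x).continuousAt).aestronglyMeasurable _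
      (Eventually.of_forall (norm_integral_kernel_smul_le (abs_laplaceKernel_le hδ.le) hu1))
  · exact MemLp.of_bound (stronglyMeasurable_of_forall_hasDerivAt hderiv).aestronglyMeasurable _
      (Eventually.of_forall hbound)

/-- smoothing property of the Laplace kernel on
`Ω = (−l/2, l/2)`: for `u ∈ L^q(Ω)` the function `𝒦u` is differentiable with
`(𝒦u)'(x) = −(δ²/2)∫_Ω sgn(x−y)e^{−δ|x−y|}u(y)dy`, the derivative satisfies
`‖(𝒦u)'‖_p ≤ (δ²/2) l^{1/p+1/q'} ‖u‖_q`, and `𝒦u ∈ W^{1,p}(Ω)`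
(both `𝒦u` and its derivative lie in `L^p(Ω)`). -/
theorem stmt_11 {𝕂 : Type*} [RCLike 𝕂] (l δ p q q' : ℝ) (hl : 0 < l) (hδ : 0 < δ)
    (hp : 1 < p) (hq : 1 < q) (hq' : 1 < q') (hconj : 1 / q + 1 / q' = 1)
    (u : ℝ → 𝕂)
    (hu : MemLp u (ENNReal.ofReal q) (volume.restrict (Set.Ioo (-(l / 2)) (l / 2)))) :
    (∀ x ∈ Set.Ioo (-(l / 2)) (l / 2),
      HasDerivAt
        (fun x' => ∫ y in Set.Ioo (-(l / 2)) (l / 2),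
          (δ / 2 * Real.exp (-δ * |x' - y|)) • u y)
        (∫ y in Set.Ioo (-(l / 2)) (l / 2),
          (-(δ ^ 2 / 2) * Real.sign (x - y) * Real.exp (-δ * |x - y|)) • u y) x) ∧
    (∫ x in Set.Ioo (-(l / 2)) (l / 2),
        ‖∫ y in Set.Ioo (-(l / 2)) (l / 2),
          (-(δ ^ 2 / 2) * Real.sign (x - y) * Real.exp (-δ * |x - y|)) • u y‖ ^ p) ^
        (1 / p) ≤
      δ ^ 2 / 2 * l ^ (1 / p + 1 / q') *
        (∫ y in Set.Ioo (-(l / 2)) (l / 2), ‖u y‖ ^ q) ^ (1 / q) ∧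
    MemLp (fun x => ∫ y in Set.Ioo (-(l / 2)) (l / 2),
        (δ / 2 * Real.exp (-δ * |x - y|)) • u y)
      (ENNReal.ofReal p) (volume.restrict (Set.Ioo (-(l / 2)) (l / 2))) ∧
    MemLp (fun x => ∫ y in Set.Ioo (-(l / 2)) (l / 2),
        (-(δ ^ 2 / 2) * Real.sign (x - y) * Real.exp (-δ * |x - y|)) • u y)
      (ENNReal.ofReal p) (volume.restrict (Set.Ioo (-(l / 2)) (l / 2))) :=
  stmt_11_general l δ p q q' hl hδ hp hq hconj u hu
end

section
/- Let Ω ⊂ ℝ^κ be an open bounded set with Lebesgue measure λ_κ, let δ > 0, α ∈ (0, 1], and let q ∈ (1, ∞) with q' defined by 1/q + 1/q' = 1. Consider the exponential root kernel k(x,y) := (δ²/2) e^{−δ|x−y|^α} and, for u ∈ L^q(Ω), the function (𝒦u)(x) := ∫_Ω k(x,y) u(y) dy. Then 𝒦u is α-Hölder continuous on Ω with the explicit estimate |(𝒦u)(x) − (𝒦u)(x̄)| ≤ (δ³/2) λ_κ(Ω)^{1/q'} |x − x̄|^α ‖u‖_q for all x, x̄ ∈ Ω. -/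
open MeasureTheory

private lemma aux_rpow_sub {α : ℝ} (hα : 0 ≤ α) (hα1 : α ≤ 1) {a b : ℝ} (hb : 0 ≤ b)
    (hba : b ≤ a) : a ^ α - b ^ α ≤ (a - b) ^ α := by
  have h := NNReal.rpow_add_le_add_rpow (Real.toNNReal (a - b)) (Real.toNNReal b) hα hα1
  have hab : Real.toNNReal (a - b) + Real.toNNReal b = Real.toNNReal a := by
    rw [← Real.toNNReal_add (by linarith) hb]
    ring_nf
  rw [hab] at h
  have h2 := NNReal.coe_le_coe.2 h
  push_cast at h2
  rw [Real.coe_toNNReal _ (by linarith), Real.coe_toNNReal _ hb,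
    Real.coe_toNNReal _ (by linarith)] at h2
  linarith

private lemma aux_abs_rpow_sub {α : ℝ} (hα : 0 ≤ α) (hα1 : α ≤ 1) {a b : ℝ} (ha : 0 ≤ a)
    (hb : 0 ≤ b) : |a ^ α - b ^ α| ≤ |a - b| ^ α := by
  rcases le_total b a with h | h
  · rw [abs_of_nonneg (sub_nonneg.2 (Real.rpow_le_rpow hb h hα)), abs_of_nonneg (sub_nonneg.2 h)]
    exact aux_rpow_sub hα hα1 hb h
  · rw [abs_of_nonpos (sub_nonpos.2 (Real.rpow_le_rpow ha h hα)), abs_of_nonpos (sub_nonpos.2 h),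
      neg_sub, neg_sub]
    exact aux_rpow_sub hα hα1 ha h

private lemma aux_exp_lip (s t : ℝ) (hs : 0 ≤ s) (ht : 0 ≤ t) :
    |Real.exp (-s) - Real.exp (-t)| ≤ |s - t| := by
  wlog h : s ≤ t generalizing s t
  · rw [abs_sub_comm, abs_sub_comm s t]; exact this t s ht hs (le_of_not_ge h)
  have h1 : Real.exp (-t) ≤ Real.exp (-s) := Real.exp_le_exp.2 (by linarith)
  rw [abs_of_nonneg (by linarith), abs_of_nonpos (by linarith)]
  have h2 : (s - t) + 1 ≤ Real.exp (s - t) := Real.add_one_le_exp _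
  have h3 : Real.exp (-s) * Real.exp (s - t) = Real.exp (-t) := by
    rw [← Real.exp_add]; ring_nf
  have h5 : Real.exp (s - t) ≤ 1 := by
    rw [← Real.exp_zero]; exact Real.exp_le_exp.2 (by linarith)
  have h4 : Real.exp (-s) ≤ 1 := by
    rw [← Real.exp_zero]; exact Real.exp_le_exp.2 (by linarith)
  nlinarith [Real.exp_pos (-s), Real.exp_pos (s - t),
    mul_le_mul_of_nonneg_right h4 (by linarith : 0 ≤ 1 - Real.exp (s - t))]

set_option maxHeartbeats 1000000 in
/-- Hölder smoothing of the exponential root kernel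
`k(x,y) = (δ²/2)e^{−δ|x−y|^α}` on an open bounded `Ω ⊂ ℝ^κ`: for `u ∈ L^q(Ω)`,
`|(𝒦u)(x) − (𝒦u)(x̄)| ≤ (δ³/2) λ_κ(Ω)^{1/q'} |x − x̄|^α ‖u‖_q`
for all `x, x̄ ∈ Ω`. -/
theorem stmt_13 {𝕂 : Type*} [RCLike 𝕂] {κ : ℕ}
    (Ω : Set (EuclideanSpace ℝ (Fin κ))) (hΩo : IsOpen Ω)
    (hΩb : Bornology.IsBounded Ω)
    (δ α q q' : ℝ) (hδ : 0 < δ) (hα : 0 < α) (hα1 : α ≤ 1)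
    (hq : 1 < q) (hq' : 1 < q') (hconj : 1 / q + 1 / q' = 1)
    (u : EuclideanSpace ℝ (Fin κ) → 𝕂)
    (hu : MemLp u (ENNReal.ofReal q) (volume.restrict Ω)) :
    ∀ x ∈ Ω, ∀ x' ∈ Ω,
      ‖(∫ y in Ω, (δ ^ 2 / 2 * Real.exp (-δ * ‖x - y‖ ^ α)) • u y) -
          ∫ y in Ω, (δ ^ 2 / 2 * Real.exp (-δ * ‖x' - y‖ ^ α)) • u y‖ ≤
        δ ^ 3 / 2 * (volume Ω).toReal ^ (1 / q') * ‖x - x'‖ ^ α *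
          (∫ y in Ω, ‖u y‖ ^ q) ^ (1 / q) := by
  intro x hx x' hx'
  -- finiteness of the measure
  have hfin : volume Ω < ⊤ := hΩb.measure_lt_top
  haveI : IsFiniteMeasure (volume.restrict Ω : Measure (EuclideanSpace ℝ (Fin κ))) := by
    constructor
    rwa [Measure.restrict_apply_univ]
  -- integrability of u
  have hui : Integrable u (volume.restrict Ω) :=
    hu.integrable (by exact_mod_cast ENNReal.one_le_ofReal.2 hq.le)
  -- kernel functions
  set f : EuclideanSpace ℝ (Fin κ) → EuclideanSpace ℝ (Fin κ) → ℝ :=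
    fun z y => δ ^ 2 / 2 * Real.exp (-δ * ‖z - y‖ ^ α) with hf
  have hcont : ∀ z, Continuous (f z) := by
    intro z
    apply continuous_const.mul
    exact Real.continuous_exp.comp
      (continuous_const.mul ((continuous_const.sub continuous_id).norm.rpow_const
        fun y => Or.inr hα.le))
  have hbdd : ∀ z y, ‖f z y‖ ≤ δ ^ 2 / 2 := by
    intro z y
    simp only [hf]
    have h1 : Real.exp (-δ * ‖z - y‖ ^ α) ≤ 1 := by
      rw [← Real.exp_zero]
      apply Real.exp_le_exp.2
      have : 0 ≤ ‖z - y‖ ^ α := Real.rpow_nonneg (norm_nonneg _) _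
      rw [neg_mul]
      exact neg_nonpos.2 (mul_nonneg hδ.le this)
    have h2 : 0 < Real.exp (-δ * ‖z - y‖ ^ α) := Real.exp_pos _
    rw [Real.norm_eq_abs, abs_of_nonneg (by positivity)]
    nlinarith
  clear_value f
  have hmem : ∀ z, MemLp (f z) ⊤ (volume.restrict Ω) := fun z =>
    memLp_top_of_bound (hcont z).aestronglyMeasurable _ (ae_of_all _ (hbdd z))
  have hint0 : ∀ z, Integrable (f z • u) (volume.restrict Ω) := fun z =>
    hui.smul_of_top_right (hmem z)
  have hint : ∀ z, Integrable (fun y => f z y • u y) (volume.restrict Ω) := fun z => by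
    exact hint0 z
  -- pointwise bound on kernel difference
  have hker : ∀ y, |f x y - f x' y| ≤ δ ^ 3 / 2 * ‖x - x'‖ ^ α := by
    intro y
    have e1 : f x y - f x' y =
        δ ^ 2 / 2 * (Real.exp (-(δ * ‖x - y‖ ^ α)) - Real.exp (-(δ * ‖x' - y‖ ^ α))) := by
      simp only [hf]; ring_nf
    have e2 := aux_exp_lip (δ * ‖x - y‖ ^ α) (δ * ‖x' - y‖ ^ α)
      (mul_nonneg hδ.le (Real.rpow_nonneg (norm_nonneg _) _))
      (mul_nonneg hδ.le (Real.rpow_nonneg (norm_nonneg _) _))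
    have e3 : |δ * ‖x - y‖ ^ α - δ * ‖x' - y‖ ^ α| = δ * |‖x - y‖ ^ α - ‖x' - y‖ ^ α| := by
      rw [← mul_sub, abs_mul, abs_of_pos hδ]
    have e4 : |‖x - y‖ ^ α - ‖x' - y‖ ^ α| ≤ |‖x - y‖ - ‖x' - y‖| ^ α :=
      aux_abs_rpow_sub hα.le hα1 (norm_nonneg _) (norm_nonneg _)
    have e5 : |‖x - y‖ - ‖x' - y‖| ≤ ‖x - x'‖ := by
      have := abs_norm_sub_norm_le (x - y) (x' - y)
      simpa using this
    have e6 : |‖x - y‖ - ‖x' - y‖| ^ α ≤ ‖x - x'‖ ^ α :=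
      Real.rpow_le_rpow (abs_nonneg _) e5 hα.le
    rw [e1, abs_mul, abs_of_nonneg (by positivity : (0:ℝ) ≤ δ ^ 2 / 2)]
    calc δ ^ 2 / 2 * |Real.exp (-(δ * ‖x - y‖ ^ α)) - Real.exp (-(δ * ‖x' - y‖ ^ α))|
        ≤ δ ^ 2 / 2 * (δ * |‖x - y‖ ^ α - ‖x' - y‖ ^ α|) := by
          rw [← e3]; exact mul_le_mul_of_nonneg_left e2 (by positivity)
      _ ≤ δ ^ 2 / 2 * (δ * ‖x - x'‖ ^ α) := by
          apply mul_le_mul_of_nonneg_left _ (by positivity)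
          exact mul_le_mul_of_nonneg_left (e4.trans e6) hδ.le
      _ = δ ^ 3 / 2 * ‖x - x'‖ ^ α := by ring
  -- Hölder inequality for ∫‖u‖
  have hconjE : Real.HolderConjugate q q' :=
    Real.holderConjugate_iff.mpr ⟨hq, by rw [← one_div, ← one_div]; exact hconj⟩
  have hone : MemLp (fun _ : EuclideanSpace ℝ (Fin κ) => (1 : 𝕂)) (ENNReal.ofReal q')
      (volume.restrict Ω) := memLp_const 1
  have hHolder := integral_mul_norm_le_Lp_mul_Lq hconjE hu hone
  simp only [norm_one, mul_one, Real.one_rpow] at hHolder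
  have hvol : (∫ _ : EuclideanSpace ℝ (Fin κ) in Ω, (1:ℝ)) = (volume Ω).toReal := by
    simp [Measure.restrict_apply_univ, Measure.real]
  rw [hvol] at hHolder
  -- main chain
  have hC : (0:ℝ) ≤ δ ^ 3 / 2 * ‖x - x'‖ ^ α := by positivity
  calc ‖(∫ y in Ω, (δ ^ 2 / 2 * Real.exp (-δ * ‖x - y‖ ^ α)) • u y) -
          ∫ y in Ω, (δ ^ 2 / 2 * Real.exp (-δ * ‖x' - y‖ ^ α)) • u y‖
      = ‖(∫ y in Ω, f x y • u y) - ∫ y in Ω, f x' y • u y‖ := by simp only [hf]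
    _ = ‖∫ y in Ω, (f x y - f x' y) • u y‖ := by
        rw [← integral_sub (hint x) (hint x')]
        simp [sub_smul]
    _ ≤ ∫ y in Ω, ‖(f x y - f x' y) • u y‖ := norm_integral_le_integral_norm _
    _ = ∫ y in Ω, |f x y - f x' y| * ‖u y‖ := by
        congr 1; funext y; rw [norm_smul, Real.norm_eq_abs]
    _ ≤ ∫ y in Ω, (δ ^ 3 / 2 * ‖x - x'‖ ^ α) * ‖u y‖ := by
        apply integral_mono _ (hui.norm.const_mul _)
        · intro y
          exact mul_le_mul_of_nonneg_right (hker y) (norm_nonneg _)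
        · have hd0 : Integrable ((f x - f x') • u) (volume.restrict Ω) :=
            hui.smul_of_top_right ((hmem x).sub (hmem x'))
          have hd : Integrable (fun y => (f x y - f x' y) • u y) (volume.restrict Ω) := by
            exact hd0
          have := hd.norm
          simpa [norm_smul] using this
    _ = (δ ^ 3 / 2 * ‖x - x'‖ ^ α) * ∫ y in Ω, ‖u y‖ := integral_const_mul _ _
    _ ≤ (δ ^ 3 / 2 * ‖x - x'‖ ^ α) *
          ((∫ y in Ω, ‖u y‖ ^ q) ^ (1 / q) * (volume Ω).toReal ^ (1 / q')) :=
        mul_le_mul_of_nonneg_left hHolder hC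
    _ = δ ^ 3 / 2 * (volume Ω).toReal ^ (1 / q') * ‖x - x'‖ ^ α *
          (∫ y in Ω, ‖u y‖ ^ q) ^ (1 / q) := by ring
end

section
/- Let X be a Banach space, 𝕀 ⊆ ℤ a discrete interval unbounded above, 𝕀' := {t ∈ 𝕀 : t+1 ∈ 𝕀}, and consider the difference equation u_{t+1} = 𝓛_t u_t + 𝓝_t(u_t) + θ 𝓝̄_t(u_t) with parameter θ ∈ ℝ, where: (H1) 𝓛_t ∈ L(X) for t ∈ 𝕀', there are projections P_t ∈ L(X) (t ∈ 𝕀) and reals K ≥ 1, 0 < α < β such that P_{t+1}𝓛_t = 𝓛_t P_t, the restriction 𝓛_t|_{ker P_t} : ker P_t → ker P_{t+1} is an isomorphism for all t ∈ 𝕀', ‖Φ(t,s)P_s‖ ≤ K α^{t−s} for all s ≤ t, and ‖(Φ(t,s)|_{ker P_s})^{−1}(id_X − P_t)‖ ≤ K β^{s−t} for all s ≤ t, where Φ(t,s) := 𝓛_{t−1}⋯𝓛_s for s < t and Φ(t,t) := id_X; (H2) 𝓝_t, 𝓝̄_t : X → X satisfy 𝓝_t(0) = 𝓝̄_t(0)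 = 0, L := sup_{t∈𝕀'} Lip 𝓝_t < ∞ and L̄ := sup_{t∈𝕀'} Lip 𝓝̄_t < ∞. Assume L < (β−α)/(8K), fix δ ∈ (4KL, (β−α)/2], set Γ := [α+δ, β−δ] and Θ := {θ ∈ ℝ : L̄|θ| ≤ L}, and let φ(·; τ, u; θ) denote the forward solution with value u at time τ. Then for every θ ∈ Θ there exists a continuous map w⁺ : 𝕀 × X → X such that: (1) the γ-stable set W⁺(θ) := {(τ, u) ∈ 𝕀 × X : sup_{t ≥ τ} γ^{τ−t}‖φ(t; τ, u; θ)‖ < ∞} is the same for every γ ∈ Γ and equals {(τ, v + w⁺(τ, v)) : τ ∈ 𝕀, v ∈ ran P_τ}; (2) W⁺(θ) is forward invariant, i.e. for every t ∈ 𝕀' and u ∈ W⁺(θ)(t), 𝓛_t u + 𝓝_t(u) + θ𝓝̄_t(u) ∈ W⁺(θ)(t+1); (3) w⁺(τ, 0) = 0, w⁺(τ, u) = w⁺(τ, P_τ u) ∈ ker P_τ for all τ ∈ 𝕀, u ∈ X; and (4) for each τ ∈ 𝕀 the map w⁺(τ, ·) is Lipschitz with constant at most K²(L + |θ|L̄)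 / (δ − 2K(L + |θ|L̄)). -/
open Set

namespace Stmt15

lemma zpow_le_zpow_base {a b : ℝ} (ha : 0 < a) (hab : a ≤ b) {n : ℤ} (hn : 0 ≤ n) :
    a ^ n ≤ b ^ n := by
  lift n to ℕ using hn
  rw [zpow_natCast, zpow_natCast]
  exact pow_le_pow_left₀ ha.le hab n

lemma intIco_succ {τ t : ℤ} (h : τ ≤ t) :
    Finset.Ico τ (t + 1) = insert t (Finset.Ico τ t) := by
  ext s; simp only [Finset.mem_Ico, Finset.mem_insert]; omega

lemma geom_Ico_bound {a g : ℝ} (ha : 0 < a) (hag : a < g) (τ : ℤ) :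
    ∀ t, τ ≤ t →
      ∑ s ∈ Finset.Ico τ t, a ^ (t - 1 - s) * g ^ (s - τ) ≤ g ^ (t - τ) / (g - a) := by
  have hg : 0 < g := ha.trans hag
  have hga : 0 < g - a := by linarith
  refine Int.le_induction (motive := fun t _ => ∑ s ∈ Finset.Ico τ t,
      a ^ (t - 1 - s) * g ^ (s - τ) ≤ g ^ (t - τ) / (g - a)) ?_ ?_
  · simp only [Finset.Ico_self, Finset.sum_empty, sub_self, zpow_zero]
    positivity
  · intro t ht ih
    rw [intIco_succ ht, Finset.sum_insert (by simp)]
    have h1 : ∀ s ∈ Finset.Ico τ t,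
        a ^ (t + 1 - 1 - s) * g ^ (s - τ) = a * (a ^ (t - 1 - s) * g ^ (s - τ)) := by
      intro s _
      rw [show t + 1 - 1 - s = 1 + (t - 1 - s) by ring, zpow_add₀ ha.ne', zpow_one]
      ring
    rw [Finset.sum_congr rfl h1, ← Finset.mul_sum]
    have h2 : a ^ (t + 1 - 1 - t) * g ^ (t - τ) = g ^ (t - τ) := by norm_num
    rw [h2, show t + 1 - τ = (t - τ) + 1 by ring, zpow_add₀ hg.ne', zpow_one]
    have hG : 0 < g ^ (t - τ) := zpow_pos hg _
    have hsum0 : 0 ≤ ∑ s ∈ Finset.Ico τ t, a ^ (t - 1 - s) * g ^ (s - τ) :=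
      Finset.sum_nonneg fun s _ => by positivity
    rw [le_div_iff₀ hga]
    rw [le_div_iff₀ hga] at ih
    nlinarith [ih]

variable {X : Type*} [NormedAddCommGroup X] [NormedSpace ℝ X]

/-- future (pseudo-unstable) part of the Lyapunov–Perron operator -/
noncomputable def fut (Ψ : ℤ → ℤ → X →L[ℝ] X) (F : ℤ → X → X) (φ : ℤ → X) (t : ℤ) : X :=
  ∑' n : ℕ, Ψ t (t + n + 1) (F (t + n) (φ (t + n)))

/-- past (pseudo-stable) part of the Lyapunov–Perron operator -/
noncomputable def past (Φ : ℤ → ℤ → X →L[ℝ] X) (P : ℤ → X →L[ℝ] X) (F : ℤ → X → X)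
    (φ : ℤ → X) (τ t : ℤ) : X :=
  ∑ s ∈ Finset.Ico τ t, Φ t (s + 1) (P (s + 1) (F s (φ s)))

/-- the Lyapunov–Perron operator -/
noncomputable def Tm (Φ : ℤ → ℤ → X →L[ℝ] X) (P : ℤ → X →L[ℝ] X)
    (Ψ : ℤ → ℤ → X →L[ℝ] X) (F : ℤ → X → X) (τ : ℤ) (v : X) (φ : ℤ → X) (t : ℤ) : X :=
  if τ ≤ t then Φ t τ (P τ v) + past Φ P F φ τ t - fut Ψ F φ t else 0

/-- weighted boundedness of a sequence -/
def Bdd (γ : ℝ) (τ : ℤ) (C : ℝ) (φ : ℤ → X) : Prop :=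
  ∀ t, τ ≤ t → ‖φ t‖ ≤ C * γ ^ (t - τ)



end Stmt15

open Stmt15 in
set_option maxHeartbeats 3200000 in
/-- existence of the pseudo-stable bundle, Theorem A.1(a):
for the parameter-dependent semilinear difference equation
`u_{t+1} = 𝓛_t u_t + 𝓝_t(u_t) + θ𝓝̄_t(u_t)` on a discrete interval `I ⊆ ℤ`
unbounded above, with an exponential dichotomy (H1) and globally Lipschitz
nonlinearities vanishing at `0` (H2), and the spectral-gap condition
`L < (β−α)/(8K)`, for each admissible `θ` the `γ`-stable set is, for every
`γ ∈ [α+δ, β−δ]`, a forward invariant set which is the graph of a continuous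
map `w⁺(τ,·)` over the ranges of the projections `P_τ`, with `w⁺(τ,0) = 0`,
`w⁺(τ,u) = w⁺(τ,P_τ u) ∈ ker P_τ` and Lipschitz constant at most
`K²(L+|θ|L̄)/(δ−2K(L+|θ|L̄))`. -/
theorem stmt_15 {X : Type*} [NormedAddCommGroup X] [NormedSpace ℝ X]
    [CompleteSpace X]
    (I : Set ℤ) (hIconn : I.OrdConnected) (hIup : ∀ s : ℤ, ∃ t ∈ I, s ≤ t)
    (𝓛 : ℤ → X →L[ℝ] X) (P : ℤ → X →L[ℝ] X)
    (K α β : ℝ) (hK : 1 ≤ K) (hα : 0 < α) (hαβ : α < β)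
    -- (H1): invariant family of projections and exponential dichotomy
    (hP : ∀ t ∈ I, (P t).comp (P t) = P t)
    (hcomm : ∀ t, t ∈ I → t + 1 ∈ I → (P (t + 1)).comp (𝓛 t) = (𝓛 t).comp (P t))
    (hiso : ∀ t, t ∈ I → t + 1 ∈ I →
      Set.BijOn (𝓛 t) (LinearMap.ker (P t : X →ₗ[ℝ] X) : Set X) (LinearMap.ker (P (t + 1) : X →ₗ[ℝ] X) : Set X))
    (Φ : ℤ → ℤ → X →L[ℝ] X)
    (hΦ0 : ∀ t, Φ t t = ContinuousLinearMap.id ℝ X)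
    (hΦrec : ∀ s t, s ≤ t → Φ (t + 1) s = (𝓛 t).comp (Φ t s))
    (hdich₁ : ∀ s t, s ≤ t → s ∈ I → t ∈ I →
      ‖(Φ t s).comp (P s)‖ ≤ K * α ^ (t - s))
    (Ψ : ℤ → ℤ → X →L[ℝ] X)  -- `Ψ s t = (Φ(t,s)|_{ker P_s})⁻¹ (id − P_t)`
    (hΨker : ∀ s t, s ≤ t → s ∈ I → t ∈ I → ∀ x, Ψ s t x ∈ LinearMap.ker (P s : X →ₗ[ℝ] X))
    (hΨinv : ∀ s t, s ≤ t → s ∈ I → t ∈ I → ∀ x, Φ t s (Ψ s t x) = x - P t x)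
    (hdich₂ : ∀ s t, s ≤ t → s ∈ I → t ∈ I → ‖Ψ s t‖ ≤ K * β ^ (s - t))
    -- (H2): nonlinearities
    (𝓝 𝓝' : ℤ → X → X)
    (h𝓝0 : ∀ t, t ∈ I → t + 1 ∈ I → 𝓝 t 0 = 0 ∧ 𝓝' t 0 = 0)
    (L L' : ℝ) (hL0 : 0 ≤ L) (hL'0 : 0 ≤ L')
    (hLip : ∀ t, t ∈ I → t + 1 ∈ I → LipschitzWith (Real.toNNReal L) (𝓝 t))
    (hLip' : ∀ t, t ∈ I → t + 1 ∈ I → LipschitzWith (Real.toNNReal L') (𝓝' t))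
    -- smallness and spectral gap
    (hsmall : L < (β - α) / (8 * K))
    (δ : ℝ) (hδ₁ : 4 * K * L < δ) (hδ₂ : δ ≤ (β - α) / 2)
    (θ : ℝ) (hθ : L' * |θ| ≤ L)
    -- forward solution operator
    (sol : ℤ → ℤ → X → X)
    (hsol0 : ∀ τ u, sol τ τ u = u)
    (hsolrec : ∀ τ t u, τ ≤ t → sol (t + 1) τ u =
      𝓛 t (sol t τ u) + 𝓝 t (sol t τ u) + θ • 𝓝' t (sol t τ u)) :
    ∃ w : ℤ → X → X,
      (∀ τ ∈ I, Continuous (w τ)) ∧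
      (∀ γ ∈ Set.Icc (α + δ) (β - δ), ∀ W : Set (ℤ × X),
        W = {pa : ℤ × X | pa.1 ∈ I ∧
              ∃ C : ℝ, ∀ t, pa.1 ≤ t → γ ^ (pa.1 - t) * ‖sol t pa.1 pa.2‖ ≤ C} →
        -- graph representation (hence independence of γ)
        (W = {pa : ℤ × X | pa.1 ∈ I ∧
              ∃ v ∈ LinearMap.range (P pa.1 : X →ₗ[ℝ] X), pa.2 = v + w pa.1 v}) ∧
        -- forward invariance
        (∀ t, t ∈ I → t + 1 ∈ I → ∀ u : X, (t, u) ∈ W →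
          (t + 1, 𝓛 t u + 𝓝 t u + θ • 𝓝' t u) ∈ W)) ∧
      (∀ τ ∈ I, w τ 0 = 0 ∧
        ∀ u : X, w τ u = w τ (P τ u) ∧ w τ u ∈ LinearMap.ker (P τ : X →ₗ[ℝ] X)) ∧
      (∀ τ ∈ I,
        LipschitzWith
          (Real.toNNReal (K ^ 2 * (L + |θ| * L') / (δ - 2 * K * (L + |θ| * L'))))
          (w τ)) := by
  classical
  have hK0 : (0:ℝ) < K := lt_of_lt_of_le one_pos hK
  have hδ0 : 0 < δ := lt_of_le_of_lt (by positivity) hδ₁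
  set M := L + |θ| * L' with hMdef
  have hM0 : 0 ≤ M := by positivity
  have hM2L : M ≤ 2 * L := by
    have h1 : |θ| * L' ≤ L := by rw [mul_comm]; exact hθ
    simp only [hMdef]; linarith
  have h2KM : 2 * K * M < δ := by nlinarith
  have hKM0 : 0 ≤ K * M := by positivity
  set q := 2 * K * M / δ with hqdef
  have hq0 : 0 ≤ q := by positivity
  have hq1 : q < 1 := by rw [hqdef, div_lt_one hδ0]; exact h2KM
  have h1q : 0 < 1 - q := by linarith
  set γ₀ := α + δ with hγ₀def
  have hγ₀mem : γ₀ ∈ Set.Icc (α + δ) (β - δ) := ⟨le_rfl, by linarith⟩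
  have hγfacts : ∀ γ ∈ Set.Icc (α + δ) (β - δ),
      0 < γ ∧ α < γ ∧ γ < β ∧ δ ≤ γ - α ∧ δ ≤ β - γ := by
    rintro γ ⟨h1, h2⟩
    refine ⟨by linarith, by linarith, by linarith, by linarith, by linarith⟩
  have memI : ∀ s t : ℤ, s ∈ I → s ≤ t → t ∈ I := by
    intro s t hs hst
    obtain ⟨T, hT, hT2⟩ := hIup t
    exact hIconn.out hs hT ⟨hst, hT2⟩
  obtain ⟨F, hFdef⟩ : ∃ F : ℤ → X → X, F = fun t x => 𝓝 t x + θ • 𝓝' t x := ⟨_, rfl⟩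
  have hFapp : ∀ t x, F t x = 𝓝 t x + θ • 𝓝' t x := fun t x => by rw [hFdef]
  have hF0 : ∀ t ∈ I, F t 0 = 0 := by
    intro t ht
    obtain ⟨h1, h2⟩ := h𝓝0 t ht (memI t (t+1) ht (by omega))
    rw [hFapp, h1, h2]; simp
  have hFlip : ∀ t ∈ I, ∀ x y : X, ‖F t x - F t y‖ ≤ M * ‖x - y‖ := by
    intro t ht x y
    have ht1 : t + 1 ∈ I := memI t (t+1) ht (by omega)
    have h1 := (hLip t ht ht1).dist_le_mul x y
    have h2 := (hLip' t ht ht1).dist_le_mul x y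
    rw [Real.coe_toNNReal L hL0, dist_eq_norm, dist_eq_norm] at h1
    rw [Real.coe_toNNReal L' hL'0, dist_eq_norm, dist_eq_norm] at h2
    calc ‖F t x - F t y‖ = ‖(𝓝 t x - 𝓝 t y) + θ • (𝓝' t x - 𝓝' t y)‖ := by
          rw [hFapp, hFapp, smul_sub]; congr 1; abel
      _ ≤ ‖𝓝 t x - 𝓝 t y‖ + ‖θ‖ * ‖𝓝' t x - 𝓝' t y‖ := by
          refine (norm_add_le _ _).trans ?_
          rw [norm_smul]
      _ ≤ L * ‖x - y‖ + |θ| * (L' * ‖x - y‖) := by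
          refine add_le_add h1 ?_
          rw [Real.norm_eq_abs]
          exact mul_le_mul_of_nonneg_left h2 (abs_nonneg θ)
      _ = M * ‖x - y‖ := by rw [hMdef]; ring
  have hFnorm : ∀ t ∈ I, ∀ x : X, ‖F t x‖ ≤ M * ‖x‖ := by
    intro t ht x
    have := hFlip t ht x 0
    rwa [hF0 t ht, sub_zero, sub_zero] at this
  have hPP : ∀ t ∈ I, ∀ x, P t (P t x) = P t x := by
    intro t ht x
    have := DFunLike.congr_fun (hP t ht) x
    simpa using this
  have Φstep : ∀ s t : ℤ, s ≤ t → ∀ x, Φ (t+1) s x = 𝓛 t (Φ t s x) := by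
    intro s t h x; rw [hΦrec s t h]; rfl
  have Φid : ∀ t : ℤ, ∀ x, Φ t t x = x := by intro t x; rw [hΦ0]; rfl
  have cocyc : ∀ r s : ℤ, s ≤ r → ∀ t, r ≤ t → ∀ x, Φ t r (Φ r s x) = Φ t s x := by
    intro r s hsr t ht
    refine Int.le_induction (motive := fun t _ => ∀ x, Φ t r (Φ r s x) = Φ t s x) ?_ ?_ t ht
    · intro x; rw [Φid]
    · intro t ht ih x
      rw [Φstep r t ht, ih, ← Φstep s t (hsr.trans ht)]
  have kerL : ∀ t, t ∈ I → ∀ y ∈ LinearMap.ker (P t : X →ₗ[ℝ] X), 𝓛 t y ∈ LinearMap.ker (P (t+1) : X →ₗ[ℝ] X) := by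
    intro t ht y hy
    have hc := DFunLike.congr_fun (hcomm t ht (memI t (t+1) ht (by omega))) y
    simp only [ContinuousLinearMap.comp_apply] at hc
    have hy0 : P t y = 0 := hy
    show P (t+1) (𝓛 t y) = 0
    rw [hc, hy0, map_zero]
  have kerinj : ∀ s, s ∈ I → ∀ t, s ≤ t → ∀ x, x ∈ LinearMap.ker (P s : X →ₗ[ℝ] X) →
      (Φ t s x ∈ LinearMap.ker (P t : X →ₗ[ℝ] X) ∧ (Φ t s x = 0 → x = 0)) := by
    intro s hs t hst
    refine Int.le_induction (motive := fun t _ => ∀ x, x ∈ LinearMap.ker (P s : X →ₗ[ℝ] X) →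
      (Φ t s x ∈ LinearMap.ker (P t : X →ₗ[ℝ] X) ∧ (Φ t s x = 0 → x = 0))) ?_ ?_ t hst
    · intro x hx
      refine ⟨by rw [Φid]; exact hx, fun h => by rwa [Φid] at h⟩
    · intro t ht ih x hx
      obtain ⟨hker, hinj⟩ := ih x hx
      have htI : t ∈ I := memI s t hs ht
      have ht1I : t + 1 ∈ I := memI s (t+1) hs (by omega)
      constructor
      · rw [Φstep s t ht x]
        exact kerL t htI _ hker
      · intro h0
        rw [Φstep s t ht x] at h0
        have h00 : (0:X) ∈ (LinearMap.ker (P t : X →ₗ[ℝ] X) : Set X) := by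
          simp [LinearMap.mem_ker]
        have := (hiso t htI ht1I).injOn hker h00 (by rw [h0, map_zero])
        exact hinj this
  have Ψuniq : ∀ s, s ∈ I → ∀ t, s ≤ t → ∀ x z, z ∈ LinearMap.ker (P s : X →ₗ[ℝ] X) →
      Φ t s z = x - P t x → z = Ψ s t x := by
    intro s hs t hst x z hz heq
    have htI : t ∈ I := memI s t hs hst
    have hΨm := hΨker s t hst hs htI x
    have hΨe := hΨinv s t hst hs htI x
    have hdiff : z - Ψ s t x ∈ LinearMap.ker (P s : X →ₗ[ℝ] X) := sub_mem hz hΨm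
    have h0 : Φ t s (z - Ψ s t x) = 0 := by rw [map_sub, heq, hΨe, sub_self]
    exact sub_eq_zero.mp ((kerinj s hs t hst _ hdiff).2 h0)
  have Ψself : ∀ t, t ∈ I → ∀ x, Ψ t t x = x - P t x := by
    intro t ht x
    have := hΨinv t t le_rfl ht ht x
    rwa [Φid] at this
  have Ψshift : ∀ t, t ∈ I → ∀ r, t + 1 ≤ r → ∀ x, 𝓛 t (Ψ t r x) = Ψ (t+1) r x := by
    intro t ht r htr x
    have hrI : r ∈ I := memI t r ht (by omega)
    have ht1I : t + 1 ∈ I := memI t (t+1) ht (by omega)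
    have h1 : t ≤ r := by omega
    refine Ψuniq (t+1) ht1I r htr x (𝓛 t (Ψ t r x)) ?_ ?_
    · exact kerL t ht _ (hΨker t r h1 ht hrI x)
    · have h2 : 𝓛 t (Ψ t r x) = Φ (t+1) t (Ψ t r x) := by
        rw [Φstep t t le_rfl, Φid]
      rw [h2, cocyc (t+1) t (by omega) r htr, hΨinv t r h1 ht hrI x]
  have futKey : ∀ γ ∈ Set.Icc (α + δ) (β - δ), ∀ τ, τ ∈ I → ∀ (g : ℤ → X) (E : ℝ),
      ∀ t, τ ≤ t → (∀ s, t ≤ s → ‖g s‖ ≤ E * γ ^ (s - τ)) →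
      ∀ n : ℕ, ‖Ψ t (t + n + 1) (g (t + n))‖ ≤ (K * E * γ ^ (t - τ) / β) * (γ / β) ^ n := by
    intro γ hγ τ hτ g E t hτt hg n
    obtain ⟨hγ0, hαγ, hγβ, _, _⟩ := hγfacts γ hγ
    have hβ0 : (0:ℝ) < β := hα.trans hαβ
    have htI : t ∈ I := memI τ t hτ hτt
    have h1 : t ≤ t + n + 1 := by omega
    have hop := hdich₂ t (t + n + 1) h1 htI (memI τ _ hτ (by omega))
    have hgb := hg (t + n) (by omega)
    have hE0 : 0 ≤ E := by
      have h2 := (norm_nonneg (g (t+n))).trans hgb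
      nlinarith [zpow_pos hγ0 (t + (n:ℤ) - τ)]
    calc ‖Ψ t (t + n + 1) (g (t + n))‖ ≤ ‖Ψ t (t + n + 1)‖ * ‖g (t + n)‖ :=
          (Ψ t (t + n + 1)).le_opNorm _
      _ ≤ (K * β ^ (t - (t + n + 1))) * (E * γ ^ (t + n - τ)) :=
          mul_le_mul hop hgb (norm_nonneg _) (by positivity)
      _ = (K * E * γ ^ (t - τ) / β) * (γ / β) ^ n := by
          rw [show t - (t + (n:ℤ) + 1) = -(((n:ℕ):ℤ) + 1) by push_cast; ring,
            show t + (n:ℤ) - τ = (t - τ) + ((n:ℕ):ℤ) by push_cast; ring,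
            zpow_add₀ hγ0.ne', zpow_neg,
            show (((n:ℕ):ℤ) + 1) = (((n+1:ℕ)):ℤ) by push_cast; ring,
            zpow_natCast, zpow_natCast, div_pow, pow_succ]
          field_simp
  have futSummable : ∀ γ ∈ Set.Icc (α + δ) (β - δ), ∀ τ, τ ∈ I → ∀ (g : ℤ → X) (E : ℝ),
      ∀ t, τ ≤ t → (∀ s, t ≤ s → ‖g s‖ ≤ E * γ ^ (s - τ)) →
      Summable (fun n : ℕ => Ψ t (t + n + 1) (g (t + n))) := by
    intro γ hγ τ hτ g E t hτt hg
    obtain ⟨hγ0, hαγ, hγβ, _, _⟩ := hγfacts γ hγ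
    have hβ0 : (0:ℝ) < β := hα.trans hαβ
    refine Summable.of_norm_bounded
      (Summable.mul_left _ (summable_geometric_of_lt_one (by positivity)
        ((div_lt_one hβ0).mpr hγβ))) (futKey γ hγ τ hτ g E t hτt hg)
  have futBound : ∀ γ ∈ Set.Icc (α + δ) (β - δ), ∀ τ, τ ∈ I → ∀ (g : ℤ → X) (E : ℝ), 0 ≤ E →
      ∀ t, τ ≤ t → (∀ s, t ≤ s → ‖g s‖ ≤ E * γ ^ (s - τ)) →
      ‖∑' n : ℕ, Ψ t (t + n + 1) (g (t + n))‖ ≤ K * E / δ * γ ^ (t - τ) := by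
    intro γ hγ τ hτ g E hE t hτt hg
    obtain ⟨hγ0, hαγ, hγβ, _, hδβγ⟩ := hγfacts γ hγ
    have hβ0 : (0:ℝ) < β := hα.trans hαβ
    have hβγ : 0 < β - γ := by linarith
    have hgeo : Summable (fun n : ℕ => (K * E * γ ^ (t - τ) / β) * (γ / β) ^ n) :=
      Summable.mul_left _ (summable_geometric_of_lt_one (by positivity)
        ((div_lt_one hβ0).mpr hγβ))
    have hB := tsum_of_norm_bounded hgeo.hasSum (futKey γ hγ τ hτ g E t hτt hg)
    rw [tsum_mul_left, tsum_geometric_of_lt_one (by positivity) ((div_lt_one hβ0).mpr hγβ)] at hB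
    refine hB.trans ?_
    have heq : (K * E * γ ^ (t - τ) / β) * (1 - γ / β)⁻¹ = K * E * γ ^ (t - τ) / (β - γ) := by
      rw [show 1 - γ / β = (β - γ) / β by field_simp]
      field_simp
    rw [heq, show K * E / δ * γ ^ (t - τ) = K * E * γ ^ (t - τ) / δ by ring]
    have h0 : 0 ≤ K * E * γ ^ (t - τ) := by positivity
    gcongr
  have pastBound : ∀ γ ∈ Set.Icc (α + δ) (β - δ), ∀ τ, τ ∈ I → ∀ (g : ℤ → X) (E : ℝ), 0 ≤ E →
      ∀ t, τ ≤ t → (∀ s, τ ≤ s → ‖g s‖ ≤ E * γ ^ (s - τ)) →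
      ‖∑ s ∈ Finset.Ico τ t, Φ t (s+1) (P (s+1) (g s))‖ ≤ K * E / δ * γ ^ (t - τ) := by
    intro γ hγ τ hτ g E hE t hτt hg
    obtain ⟨hγ0, hαγ, hγβ, hδγα, _⟩ := hγfacts γ hγ
    have hγα : 0 < γ - α := by linarith
    calc ‖∑ s ∈ Finset.Ico τ t, Φ t (s+1) (P (s+1) (g s))‖
        ≤ ∑ s ∈ Finset.Ico τ t, ‖Φ t (s+1) (P (s+1) (g s))‖ := norm_sum_le _ _
      _ ≤ ∑ s ∈ Finset.Ico τ t, (K * E) * (α ^ (t-1-s) * γ ^ (s - τ)) := by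
          refine Finset.sum_le_sum fun s hs => ?_
          rw [Finset.mem_Ico] at hs
          have h1 : s + 1 ≤ t := by omega
          have hop := hdich₁ (s+1) t h1 (memI τ _ hτ (by omega)) (memI τ _ hτ hτt)
          calc ‖Φ t (s+1) (P (s+1) (g s))‖
              ≤ ‖(Φ t (s+1)).comp (P (s+1))‖ * ‖g s‖ :=
                ((Φ t (s+1)).comp (P (s+1))).le_opNorm (g s)
            _ ≤ (K * α ^ (t - (s+1))) * (E * γ ^ (s - τ)) :=
                mul_le_mul hop (hg s hs.1) (norm_nonneg _) (by positivity)
            _ = (K * E) * (α ^ (t-1-s) * γ ^ (s-τ)) := by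
                rw [show t - (s+1) = t-1-s by ring]; ring
      _ = (K * E) * ∑ s ∈ Finset.Ico τ t, α ^ (t-1-s) * γ ^ (s-τ) := by
          rw [Finset.mul_sum]
      _ ≤ (K * E) * (γ ^ (t-τ) / (γ - α)) :=
          mul_le_mul_of_nonneg_left (geom_Ico_bound hα hαγ τ t hτt) (by positivity)
      _ ≤ K * E / δ * γ ^ (t - τ) := by
          have h0 : 0 ≤ K * E * γ ^ (t-τ) := by positivity
          calc (K * E) * (γ ^ (t-τ) / (γ - α)) = K * E * γ ^ (t-τ) / (γ - α) := by ring
            _ ≤ K * E * γ ^ (t-τ) / δ := by gcongr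
            _ = K * E / δ * γ ^ (t - τ) := by ring
  have hT00 : ∀ τ, τ ∈ I → ∀ t, Tm Φ P Ψ F τ 0 (0 : ℤ → X) t = 0 := by
    intro τ hτ t
    rw [Tm]
    split
    · rename_i ht
      have hpast : past Φ P F (0 : ℤ → X) τ t = 0 := by
        refine Finset.sum_eq_zero fun s hs => ?_
        rw [Finset.mem_Ico] at hs
        rw [show (0:ℤ→X) s = 0 from rfl, hF0 s (memI τ s hτ hs.1), map_zero, map_zero]
      have hfut : fut Ψ F (0 : ℤ → X) t = 0 := by
        rw [fut]
        have hz : ∀ n : ℕ, Ψ t (t+n+1) (F (t+n) ((0:ℤ→X) (t+n))) = 0 := fun n => by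
          rw [show (0:ℤ→X) (t+(n:ℤ)) = 0 from rfl, hF0 (t+n) (memI τ _ hτ (by omega)), map_zero]
        rw [tsum_congr hz, tsum_zero]
      rw [hpast, hfut, map_zero, map_zero]
      simp
    · rfl
  have hTdiff : ∀ γ ∈ Set.Icc (α + δ) (β - δ), ∀ τ, τ ∈ I →
      ∀ (v₁ v₂ : X) (φ₁ φ₂ : ℤ → X) (C₁ C₂ D : ℝ),
      Bdd γ τ C₁ φ₁ → Bdd γ τ C₂ φ₂ → 0 ≤ D →
      (∀ s, τ ≤ s → ‖φ₁ s - φ₂ s‖ ≤ D * γ ^ (s - τ)) →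
      ∀ t, τ ≤ t → ‖Tm Φ P Ψ F τ v₁ φ₁ t - Tm Φ P Ψ F τ v₂ φ₂ t‖ ≤
        (K * ‖v₁ - v₂‖ + q * D) * γ ^ (t - τ) := by
    intro γ hγ τ hτ v₁ v₂ φ₁ φ₂ C₁ C₂ D hb1 hb2 hD hpt t ht
    obtain ⟨hγ0, hαγ, hγβ, _, _⟩ := hγfacts γ hγ
    have htI := memI τ t hτ ht
    have hgb1 : ∀ s, τ ≤ s → ‖F s (φ₁ s)‖ ≤ (M * C₁) * γ ^ (s - τ) := by
      intro s hs
      calc ‖F s (φ₁ s)‖ ≤ M * ‖φ₁ s‖ := hFnorm s (memI τ s hτ hs) _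
        _ ≤ M * (C₁ * γ ^ (s - τ)) := mul_le_mul_of_nonneg_left (hb1 s hs) hM0
        _ = (M * C₁) * γ ^ (s - τ) := by ring
    have hgb2 : ∀ s, τ ≤ s → ‖F s (φ₂ s)‖ ≤ (M * C₂) * γ ^ (s - τ) := by
      intro s hs
      calc ‖F s (φ₂ s)‖ ≤ M * ‖φ₂ s‖ := hFnorm s (memI τ s hτ hs) _
        _ ≤ M * (C₂ * γ ^ (s - τ)) := mul_le_mul_of_nonneg_left (hb2 s hs) hM0
        _ = (M * C₂) * γ ^ (s - τ) := by ring
    have hgd : ∀ s, τ ≤ s → ‖F s (φ₁ s) - F s (φ₂ s)‖ ≤ (M * D) * γ ^ (s - τ) := by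
      intro s hs
      calc ‖F s (φ₁ s) - F s (φ₂ s)‖ ≤ M * ‖φ₁ s - φ₂ s‖ := hFlip s (memI τ s hτ hs) _ _
        _ ≤ M * (D * γ ^ (s - τ)) := mul_le_mul_of_nonneg_left (hpt s hs) hM0
        _ = (M * D) * γ ^ (s - τ) := by ring
    have hsum1 : Summable (fun n : ℕ => Ψ t (t + n + 1) (F (t + n) (φ₁ (t + n)))) :=
      futSummable γ hγ τ hτ (fun s => F s (φ₁ s)) (M * C₁) t ht (fun s hs => hgb1 s (ht.trans hs))
    have hsum2 : Summable (fun n : ℕ => Ψ t (t + n + 1) (F (t + n) (φ₂ (t + n)))) :=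
      futSummable γ hγ τ hτ (fun s => F s (φ₂ s)) (M * C₂) t ht (fun s hs => hgb2 s (ht.trans hs))
    have hfutd : fut Ψ F φ₁ t - fut Ψ F φ₂ t
        = ∑' n : ℕ, Ψ t (t + n + 1) (F (t + n) (φ₁ (t + n)) - F (t + n) (φ₂ (t + n))) := by
      rw [fut, fut, ← Summable.tsum_sub hsum1 hsum2]
      exact tsum_congr fun n => (map_sub (Ψ t (t + n + 1)) _ _).symm
    have hfutb : ‖fut Ψ F φ₁ t - fut Ψ F φ₂ t‖ ≤ K * (M * D) / δ * γ ^ (t - τ) := by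
      rw [hfutd]
      exact futBound γ hγ τ hτ (fun s => F s (φ₁ s) - F s (φ₂ s)) (M * D) (by positivity)
        t ht (fun s hs => hgd s (ht.trans hs))
    have hpastd : past Φ P F φ₁ τ t - past Φ P F φ₂ τ t
        = ∑ s ∈ Finset.Ico τ t, Φ t (s+1) (P (s+1) (F s (φ₁ s) - F s (φ₂ s))) := by
      rw [past, past, ← Finset.sum_sub_distrib]
      exact Finset.sum_congr rfl fun s _ => by rw [map_sub, map_sub]
    have hpastb : ‖past Φ P F φ₁ τ t - past Φ P F φ₂ τ t‖ ≤ K * (M * D) / δ * γ ^ (t - τ) := by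
      rw [hpastd]
      exact pastBound γ hγ τ hτ (fun s => F s (φ₁ s) - F s (φ₂ s)) (M * D) (by positivity)
        t ht hgd
    have hΦb : ‖Φ t τ (P τ v₁) - Φ t τ (P τ v₂)‖ ≤ K * ‖v₁ - v₂‖ * γ ^ (t - τ) := by
      have hΦd : Φ t τ (P τ v₁) - Φ t τ (P τ v₂) = ((Φ t τ).comp (P τ)) (v₁ - v₂) := by
        simp [map_sub]
      rw [hΦd]
      calc ‖((Φ t τ).comp (P τ)) (v₁ - v₂)‖ ≤ ‖(Φ t τ).comp (P τ)‖ * ‖v₁ - v₂‖ :=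
            ((Φ t τ).comp (P τ)).le_opNorm _
        _ ≤ (K * α ^ (t - τ)) * ‖v₁ - v₂‖ :=
            mul_le_mul_of_nonneg_right (hdich₁ τ t ht hτ htI) (norm_nonneg _)
        _ ≤ (K * γ ^ (t - τ)) * ‖v₁ - v₂‖ := by
            have hz := zpow_le_zpow_base hα hαγ.le (by omega : (0:ℤ) ≤ t - τ)
            have := norm_nonneg (v₁ - v₂)
            gcongr
        _ = K * ‖v₁ - v₂‖ * γ ^ (t - τ) := by ring
    simp only [Tm, if_pos ht]
    have hre : (Φ t τ (P τ v₁) + past Φ P F φ₁ τ t - fut Ψ F φ₁ t)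
        - (Φ t τ (P τ v₂) + past Φ P F φ₂ τ t - fut Ψ F φ₂ t)
        = ((Φ t τ (P τ v₁) - Φ t τ (P τ v₂)) + (past Φ P F φ₁ τ t - past Φ P F φ₂ τ t))
          - (fut Ψ F φ₁ t - fut Ψ F φ₂ t) := by abel
    rw [hre]
    calc ‖((Φ t τ (P τ v₁) - Φ t τ (P τ v₂)) + (past Φ P F φ₁ τ t - past Φ P F φ₂ τ t))
          - (fut Ψ F φ₁ t - fut Ψ F φ₂ t)‖
        ≤ ‖(Φ t τ (P τ v₁) - Φ t τ (P τ v₂)) + (past Φ P F φ₁ τ t - past Φ P F φ₂ τ t)‖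
          + ‖fut Ψ F φ₁ t - fut Ψ F φ₂ t‖ := norm_sub_le _ _
      _ ≤ (‖Φ t τ (P τ v₁) - Φ t τ (P τ v₂)‖ + ‖past Φ P F φ₁ τ t - past Φ P F φ₂ τ t‖)
          + ‖fut Ψ F φ₁ t - fut Ψ F φ₂ t‖ := by
            gcongr
            exact norm_add_le _ _
      _ ≤ (K * ‖v₁ - v₂‖ * γ ^ (t - τ) + K * (M * D) / δ * γ ^ (t - τ))
          + K * (M * D) / δ * γ ^ (t - τ) := by
            gcongr
      _ = (K * ‖v₁ - v₂‖ + q * D) * γ ^ (t - τ) := by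
            rw [hqdef]; ring
  have hTbdd : ∀ γ ∈ Set.Icc (α + δ) (β - δ), ∀ τ, τ ∈ I → ∀ (v : X) (φ : ℤ → X) (C : ℝ),
      0 ≤ C → Bdd γ τ C φ → Bdd γ τ (K * ‖v‖ + q * C) (Tm Φ P Ψ F τ v φ) := by
    intro γ hγ τ hτ v φ C hC hb t ht
    have hb0 : Bdd γ τ 0 (0 : ℤ → X) := by
      intro r hr
      simp [Bdd]
    have hpt0 : ∀ s, τ ≤ s → ‖φ s - (0:ℤ→X) s‖ ≤ C * γ ^ (s - τ) := by
      intro s hs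
      simpa using hb s hs
    have h := hTdiff γ hγ τ hτ v 0 φ (0 : ℤ → X) C 0 C hb hb0 hC hpt0 t ht
    rw [hT00 τ hτ t, sub_zero, sub_zero] at h
    exact h
  have pastStep : ∀ (φ : ℤ → X) (τ t : ℤ), τ ≤ t →
      past Φ P F φ τ (t+1) = 𝓛 t (past Φ P F φ τ t) + P (t+1) (F t (φ t)) := by
    intro φ τ t ht
    rw [past, past, intIco_succ ht, Finset.sum_insert (by simp)]
    have h1 : ∀ s ∈ Finset.Ico τ t, Φ (t+1) (s+1) (P (s+1) (F s (φ s)))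
        = 𝓛 t (Φ t (s+1) (P (s+1) (F s (φ s)))) := by
      intro s hs
      rw [Finset.mem_Ico] at hs
      exact Φstep (s+1) t (by omega) _
    rw [Finset.sum_congr rfl h1, ← map_sum (𝓛 t) _ (Finset.Ico τ t), Φid]
    abel
  have hTstep : ∀ γ ∈ Set.Icc (α + δ) (β - δ), ∀ τ, τ ∈ I → ∀ (v : X) (φ : ℤ → X) (C : ℝ),
      Bdd γ τ C φ → ∀ t, τ ≤ t →
      Tm Φ P Ψ F τ v φ (t+1) = 𝓛 t (Tm Φ P Ψ F τ v φ t) + F t (φ t) := by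
    intro γ hγ τ hτ v φ C hb t ht
    have htI := memI τ t hτ ht
    have hgb : ∀ s, τ ≤ s → ‖F s (φ s)‖ ≤ (M * C) * γ ^ (s - τ) := by
      intro s hs
      calc ‖F s (φ s)‖ ≤ M * ‖φ s‖ := hFnorm s (memI τ s hτ hs) _
        _ ≤ M * (C * γ ^ (s - τ)) := mul_le_mul_of_nonneg_left (hb s hs) hM0
        _ = (M * C) * γ ^ (s - τ) := by ring
    have hsum_t : Summable (fun n : ℕ => Ψ t (t + n + 1) (F (t + n) (φ (t + n)))) :=
      futSummable γ hγ τ hτ (fun s => F s (φ s)) (M * C) t ht (fun s hs => hgb s (ht.trans hs))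
    have hterm : ∀ n : ℕ, 𝓛 t (Ψ t (t + n + 1) (F (t + n) (φ (t + n))))
        = Ψ (t+1) (t + n + 1) (F (t + n) (φ (t + n))) := fun n =>
      Ψshift t htI (t + n + 1) (by omega) _
    have hsum' : Summable (fun n : ℕ => Ψ (t+1) (t + n + 1) (F (t + n) (φ (t + n)))) := by
      refine Summable.congr (hsum_t.map (𝓛 t).toLinearMap.toAddMonoidHom (𝓛 t).continuous) ?_
      intro n
      exact hterm n
    have hLfut : 𝓛 t (fut Ψ F φ t) = (F t (φ t) - P (t+1) (F t (φ t))) + fut Ψ F φ (t+1) := by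
      rw [fut, ContinuousLinearMap.map_tsum (𝓛 t) hsum_t, tsum_congr hterm,
        Summable.tsum_eq_zero_add hsum']
      congr 1
      · norm_num
        exact Ψself (t+1) (memI τ (t+1) hτ (by omega)) _
      · rw [fut]
        refine tsum_congr fun n => ?_
        have e1 : t + ((n:ℤ) + 1) + 1 = t + 1 + (n:ℤ) + 1 := by ring
        have e2 : t + ((n:ℤ) + 1) = t + 1 + (n:ℤ) := by ring
        push_cast
        rw [e1, e2]
    have ht1 : τ ≤ t + 1 := by omega
    simp only [Tm, if_pos ht, if_pos ht1]
    rw [map_sub, map_add, hLfut, pastStep φ τ t ht, Φstep τ t ht]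
    abel
  have hsolF : ∀ τ t u, τ ≤ t → sol (t+1) τ u = 𝓛 t (sol t τ u) + F t (sol t τ u) := by
    intro τ t u h
    rw [hFapp, hsolrec τ t u h, add_assoc]
  have hfix_sol : ∀ τ (φ : ℤ → X), (∀ t, τ ≤ t → φ (t+1) = 𝓛 t (φ t) + F t (φ t)) →
      ∀ t, τ ≤ t → sol t τ (φ τ) = φ t := by
    intro τ φ hrec
    refine Int.le_induction (motive := fun t _ => sol t τ (φ τ) = φ t) ?_ ?_
    · exact hsol0 τ (φ τ)
    · intro t ht ih
      rw [hsolF τ t (φ τ) ht, ih, hrec t ht]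
  have hmaster : ∀ γ ∈ Set.Icc (α + δ) (β - δ), ∀ τ, τ ∈ I →
      ∀ (v₁ v₂ : X) (φ₁ φ₂ : ℤ → X) (C₁ C₂ : ℝ),
      Bdd γ τ C₁ φ₁ → Bdd γ τ C₂ φ₂ →
      (∀ t, φ₁ t = Tm Φ P Ψ F τ v₁ φ₁ t) → (∀ t, φ₂ t = Tm Φ P Ψ F τ v₂ φ₂ t) →
      ∀ t, τ ≤ t → ‖φ₁ t - φ₂ t‖ ≤ (K * ‖v₁ - v₂‖ / (1 - q)) * γ ^ (t - τ) := by
    intro γ hγ τ hτ v₁ v₂ φ₁ φ₂ C₁ C₂ hb1 hb2 hf1 hf2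
    obtain ⟨hγ0, hαγ, hγβ, _, _⟩ := hγfacts γ hγ
    have hinv : ∀ t : ℤ, γ ^ (τ - t) * γ ^ (t - τ) = 1 := fun t => by
      rw [← zpow_add₀ hγ0.ne']; norm_num
    set A : Set ℝ := (fun t => γ ^ (τ - t) * ‖φ₁ t - φ₂ t‖) '' {r : ℤ | τ ≤ r} with hAdef
    have hAne : A.Nonempty := ⟨_, ⟨τ, (by simp : τ ∈ {r : ℤ | τ ≤ r}), rfl⟩⟩
    have hAbd : BddAbove A := by
      refine ⟨C₁ + C₂, ?_⟩
      rintro x ⟨t, ht, rfl⟩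
      simp only [Set.mem_setOf_eq] at ht
      have h1 : ‖φ₁ t - φ₂ t‖ ≤ (C₁ + C₂) * γ ^ (t - τ) := by
        calc ‖φ₁ t - φ₂ t‖ ≤ ‖φ₁ t‖ + ‖φ₂ t‖ := norm_sub_le _ _
          _ ≤ C₁ * γ ^ (t-τ) + C₂ * γ ^ (t-τ) := add_le_add (hb1 t ht) (hb2 t ht)
          _ = (C₁ + C₂) * γ ^ (t-τ) := by ring
      calc γ ^ (τ-t) * ‖φ₁ t - φ₂ t‖ ≤ γ ^ (τ-t) * ((C₁+C₂) * γ ^ (t-τ)) :=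
            mul_le_mul_of_nonneg_left h1 (zpow_pos hγ0 _).le
        _ = (C₁+C₂) * (γ ^ (τ-t) * γ ^ (t-τ)) := by ring
        _ = C₁ + C₂ := by rw [hinv t, mul_one]
    set S := sSup A with hSdef
    have hS0 : 0 ≤ S := by
      have hel : γ ^ (τ-τ) * ‖φ₁ τ - φ₂ τ‖ ∈ A := ⟨τ, (by simp : τ ∈ {r : ℤ | τ ≤ r}), rfl⟩
      exact le_trans (by positivity) (le_csSup hAbd hel)
    have hptS : ∀ s, τ ≤ s → ‖φ₁ s - φ₂ s‖ ≤ S * γ ^ (s - τ) := by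
      intro s hs
      have hel : γ ^ (τ-s) * ‖φ₁ s - φ₂ s‖ ≤ S := le_csSup hAbd ⟨s, hs, rfl⟩
      calc ‖φ₁ s - φ₂ s‖ = (γ ^ (τ-s) * ‖φ₁ s - φ₂ s‖) * γ ^ (s-τ) := by
            rw [mul_comm (γ ^ (τ-s)) _, mul_assoc, hinv s, mul_one]
        _ ≤ S * γ ^ (s-τ) := mul_le_mul_of_nonneg_right hel (zpow_pos hγ0 _).le
    have hkey : S ≤ K * ‖v₁ - v₂‖ + q * S := by
      refine csSup_le hAne ?_
      rintro x ⟨t, ht, rfl⟩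
      simp only [Set.mem_setOf_eq] at ht
      have hTd := hTdiff γ hγ τ hτ v₁ v₂ φ₁ φ₂ C₁ C₂ S hb1 hb2 hS0 hptS t ht
      rw [← hf1 t, ← hf2 t] at hTd
      calc γ ^ (τ-t) * ‖φ₁ t - φ₂ t‖ ≤ γ ^ (τ-t) * ((K*‖v₁-v₂‖ + q*S) * γ ^ (t-τ)) :=
            mul_le_mul_of_nonneg_left hTd (zpow_pos hγ0 _).le
        _ = (K*‖v₁-v₂‖ + q*S) * (γ^(τ-t)*γ^(t-τ)) := by ring
        _ = K*‖v₁-v₂‖ + q*S := by rw [hinv t, mul_one]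
    have hSle : S ≤ K * ‖v₁ - v₂‖ / (1 - q) := by
      rw [le_div_iff₀ h1q]
      nlinarith [hkey]
    intro t ht
    calc ‖φ₁ t - φ₂ t‖ ≤ S * γ ^ (t-τ) := hptS t ht
      _ ≤ (K*‖v₁-v₂‖/(1-q)) * γ ^ (t-τ) :=
          mul_le_mul_of_nonneg_right hSle (zpow_pos hγ0 _).le
  have hLP : ∀ γ ∈ Set.Icc (α + δ) (β - δ), ∀ τ, τ ∈ I → ∀ (u : X) (C : ℝ),
      (∀ t, τ ≤ t → ‖sol t τ u‖ ≤ C * γ ^ (t - τ)) →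
      ∀ t, (fun r => if τ ≤ r then sol r τ u else 0) t
          = Tm Φ P Ψ F τ (P τ u) (fun r => if τ ≤ r then sol r τ u else 0) t := by
    intro γ hγ τ hτ u C hbu
    obtain ⟨hγ0, hαγ, hγβ, _, _⟩ := hγfacts γ hγ
    have hβ0 : (0:ℝ) < β := hα.trans hαβ
    set φ : ℤ → X := fun r => if τ ≤ r then sol r τ u else 0 with hφdef
    have hφval : ∀ r, τ ≤ r → φ r = sol r τ u := fun r hr => by
      simp only [hφdef, if_pos hr]
    have hC0 : 0 ≤ C := by
      have h1 := hbu τ le_rfl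
      have h2 : γ ^ ((τ:ℤ) - τ) = 1 := by norm_num
      rw [h2, mul_one] at h1
      exact (norm_nonneg _).trans h1
    have hb : Bdd γ τ C φ := fun r hr => by rw [hφval r hr]; exact hbu r hr
    have hrec : ∀ r, τ ≤ r → φ (r+1) = 𝓛 r (φ r) + F r (φ r) := fun r hr => by
      rw [hφval (r+1) (by omega), hφval r hr, hsolF τ r u hr]
    have hgb : ∀ s, τ ≤ s → ‖F s (φ s)‖ ≤ (M * C) * γ ^ (s - τ) := by
      intro s hs
      calc ‖F s (φ s)‖ ≤ M * ‖φ s‖ := hFnorm s (memI τ s hτ hs) _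
        _ ≤ M * (C * γ ^ (s - τ)) := mul_le_mul_of_nonneg_left (hb s hs) hM0
        _ = (M * C) * γ ^ (s - τ) := by ring
    have hPpart : ∀ t, τ ≤ t → P t (φ t) = Φ t τ (P τ u) + past Φ P F φ τ t := by
      refine Int.le_induction
        (motive := fun t _ => P t (φ t) = Φ t τ (P τ u) + past Φ P F φ τ t) ?_ ?_
      · beta_reduce
        rw [hφval τ le_rfl, hsol0, Φid, past, Finset.Ico_self, Finset.sum_empty, add_zero]
      · intro t ht ih
        beta_reduce
        beta_reduce at ih
        have htI := memI τ t hτ ht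
        have ht1I := memI τ (t+1) hτ (by omega)
        have hcm := DFunLike.congr_fun (hcomm t htI ht1I) (φ t)
        simp only [ContinuousLinearMap.comp_apply] at hcm
        rw [hrec t ht, map_add, pastStep φ τ t ht, hcm, ih, map_add, Φstep τ t ht]
        abel
    have hQpart : ∀ t, τ ≤ t → φ t - P t (φ t) = - fut Ψ F φ t := by
      intro t ht
      have htI := memI τ t hτ ht
      have hsum : Summable (fun n : ℕ => Ψ t (t + n + 1) (F (t + n) (φ (t + n)))) :=
        futSummable γ hγ τ hτ (fun s => F s (φ s)) (M * C) t ht (fun s hs => hgb s (ht.trans hs))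
      set z : ℕ → X := fun m => (φ t - P t (φ t))
        + ∑ n ∈ Finset.range m, Ψ t (t + n + 1) (F (t + n) (φ (t + n))) with hzdef
      have hz1 : ∀ m : ℕ, z m ∈ LinearMap.ker (P t : X →ₗ[ℝ] X) := by
        intro m
        refine add_mem ?_ (sum_mem fun n _ =>
          hΨker t (t + n + 1) (by omega) htI (memI τ _ hτ (by omega)) _)
        show P t (φ t - P t (φ t)) = 0
        rw [map_sub, hPP t htI, sub_self]
      have hz2 : ∀ m : ℕ, Φ (t + m) t (z m) = φ (t + m) - P (t + m) (φ (t + m)) := by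
        intro m
        induction m with
        | zero => simp [hzdef, Φid]
        | succ m ih =>
          have hr : τ ≤ t + (m:ℤ) := by omega
          have hrI : t + (m:ℤ) ∈ I := memI τ _ hτ hr
          have hr1I : t + (m:ℤ) + 1 ∈ I := memI τ _ hτ (by omega)
          have hzsucc : z (m+1) = z m + Ψ t (t + m + 1) (F (t + m) (φ (t + m))) := by
            simp only [hzdef, Finset.sum_range_succ]
            abel
          have hcast : (((m:ℕ)+1:ℕ):ℤ) = (m:ℤ) + 1 := by push_cast; ring
          have hgoalcast : t + (((m:ℕ)+1:ℕ):ℤ) = (t + (m:ℤ)) + 1 := by rw [hcast]; ring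
          rw [hgoalcast, hzsucc, map_add, Φstep t (t + (m:ℤ)) (by omega), ih,
            hΨinv t (t + (m:ℤ) + 1) (by omega) htI hr1I]
          have hcm := DFunLike.congr_fun (hcomm (t + (m:ℤ)) hrI hr1I) (φ (t + (m:ℤ)))
          simp only [ContinuousLinearMap.comp_apply] at hcm
          rw [map_sub, ← hcm, hrec (t + (m:ℤ)) hr, map_add]
          abel
      have hz3 : ∀ m : ℕ, z m = Ψ t (t + m) (φ (t + m)) := fun m =>
        Ψuniq t htI (t + m) (by omega) (φ (t + m)) (z m) (hz1 m) (hz2 m)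
      have hz4 : ∀ m : ℕ, ‖z m‖ ≤ (K * C * γ ^ (t - τ)) * (γ/β) ^ m := by
        intro m
        rw [hz3 m]
        have hop := hdich₂ t (t + m) (by omega) htI (memI τ _ hτ (by omega))
        calc ‖Ψ t (t + m) (φ (t + m))‖ ≤ ‖Ψ t (t + m)‖ * ‖φ (t + m)‖ :=
              (Ψ t (t + m)).le_opNorm _
          _ ≤ (K * β ^ (t - (t + m))) * (C * γ ^ (t + m - τ)) :=
              mul_le_mul hop (hb _ (by omega)) (norm_nonneg _) (by positivity)
          _ = (K * C * γ ^ (t - τ)) * (γ/β) ^ m := by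
              rw [show t - (t + (m:ℤ)) = -((m:ℕ):ℤ) by push_cast; ring,
                show t + (m:ℤ) - τ = (t - τ) + ((m:ℕ):ℤ) by push_cast; ring,
                zpow_add₀ hγ0.ne', zpow_neg, zpow_natCast, zpow_natCast, div_pow]
              field_simp
      have htend0 : Filter.Tendsto z Filter.atTop (nhds 0) := by
        refine squeeze_zero_norm hz4 ?_
        have h1 := (tendsto_pow_atTop_nhds_zero_of_lt_one
          (div_nonneg hγ0.le hβ0.le) ((div_lt_one hβ0).mpr hγβ)).const_mul
          (K * C * γ ^ (t - τ))
        simpa using h1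
      have htendS : Filter.Tendsto z Filter.atTop
          (nhds ((φ t - P t (φ t)) + fut Ψ F φ t)) := by
        rw [fut]
        exact Filter.Tendsto.const_add _ hsum.hasSum.tendsto_sum_nat
      have heq0 : (φ t - P t (φ t)) + fut Ψ F φ t = 0 := tendsto_nhds_unique htendS htend0
      exact eq_neg_of_add_eq_zero_left heq0
    intro t
    show φ t = Tm Φ P Ψ F τ (P τ u) φ t
    by_cases ht : τ ≤ t
    · simp only [Tm, if_pos ht]
      rw [hPP τ hτ u, ← hPpart t ht]
      calc φ t = P t (φ t) + (φ t - P t (φ t)) := by abel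
        _ = P t (φ t) + - fut Ψ F φ t := by rw [hQpart t ht]
        _ = P t (φ t) - fut Ψ F φ t := by abel
    · simp only [Tm, if_neg ht, hφdef, if_neg ht]
  have hγ₀0 : 0 < γ₀ := by rw [hγ₀def]; linarith
  have hex : ∀ τ, τ ∈ I → ∀ v : X, ∃ φ : ℤ → X,
      (∀ t, φ t = Tm Φ P Ψ F τ v φ t) ∧ ∃ C, 0 ≤ C ∧ Bdd γ₀ τ C φ := by
    intro τ hτ v
    obtain ⟨toSeq, htoSeq⟩ : ∃ G : BoundedContinuousFunction ℤ X → ℤ → X,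
        G = fun ψ s => γ₀ ^ (s - τ) • ψ s := ⟨_, rfl⟩
    have htoSeqApp : ∀ ψ s, toSeq ψ s = γ₀ ^ (s - τ) • ψ s := fun ψ s => by rw [htoSeq]
    have hinv : ∀ t : ℤ, γ₀ ^ (τ - t) * γ₀ ^ (t - τ) = 1 := fun t => by
      rw [← zpow_add₀ hγ₀0.ne']; norm_num
    have hbddSeq : ∀ ψ, Bdd γ₀ τ ‖ψ‖ (toSeq ψ) := by
      intro ψ s _
      rw [htoSeqApp, norm_smul, Real.norm_eq_abs, abs_of_pos (zpow_pos hγ₀0 _)]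
      calc γ₀ ^ (s-τ) * ‖ψ s‖ ≤ γ₀ ^ (s-τ) * ‖ψ‖ :=
            mul_le_mul_of_nonneg_left (ψ.norm_coe_le_norm s) (zpow_pos hγ₀0 _).le
        _ = ‖ψ‖ * γ₀ ^ (s-τ) := by ring
    have hThB : ∀ ψ : BoundedContinuousFunction ℤ X, ∀ t : ℤ,
        ‖γ₀ ^ (τ - t) • Tm Φ P Ψ F τ v (toSeq ψ) t‖ ≤ K * ‖v‖ + q * ‖ψ‖ := by
      intro ψ t
      by_cases ht : τ ≤ t
      · have hTb := hTbdd γ₀ hγ₀mem τ hτ v (toSeq ψ) ‖ψ‖ (norm_nonneg ψ) (hbddSeq ψ) t ht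
        rw [norm_smul, Real.norm_eq_abs, abs_of_pos (zpow_pos hγ₀0 _)]
        calc γ₀ ^ (τ-t) * ‖Tm Φ P Ψ F τ v (toSeq ψ) t‖
            ≤ γ₀ ^ (τ-t) * ((K*‖v‖+q*‖ψ‖) * γ₀ ^ (t-τ)) :=
              mul_le_mul_of_nonneg_left hTb (zpow_pos hγ₀0 _).le
          _ = (K*‖v‖+q*‖ψ‖) * (γ₀^(τ-t)*γ₀^(t-τ)) := by ring
          _ = K*‖v‖+q*‖ψ‖ := by rw [hinv t, mul_one]
      · simp only [Tm, if_neg ht, smul_zero, norm_zero]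
        positivity
    obtain ⟨Th, hThdef⟩ : ∃ G : BoundedContinuousFunction ℤ X → BoundedContinuousFunction ℤ X,
        G = fun ψ => BoundedContinuousFunction.ofNormedAddCommGroup
          (fun t => γ₀ ^ (τ - t) • Tm Φ P Ψ F τ v (toSeq ψ) t)
          continuous_of_discreteTopology (K*‖v‖+q*‖ψ‖) (hThB ψ) := ⟨_, rfl⟩
    have hThapp : ∀ ψ t, Th ψ t = γ₀ ^ (τ - t) • Tm Φ P Ψ F τ v (toSeq ψ) t := by
      intro ψ t
      rw [hThdef]
      rfl
    have hlip : ∀ ψ₁ ψ₂, dist (Th ψ₁) (Th ψ₂) ≤ q * dist ψ₁ ψ₂ := by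
      intro ψ₁ ψ₂
      have hd0 : 0 ≤ q * dist ψ₁ ψ₂ := by positivity
      rw [BoundedContinuousFunction.dist_le hd0]
      intro t
      rw [dist_eq_norm, hThapp, hThapp, ← smul_sub]
      by_cases ht : τ ≤ t
      · have hptw : ∀ s, τ ≤ s → ‖toSeq ψ₁ s - toSeq ψ₂ s‖ ≤ dist ψ₁ ψ₂ * γ₀ ^ (s - τ) := by
          intro s _
          rw [htoSeqApp, htoSeqApp, ← smul_sub, norm_smul, Real.norm_eq_abs,
            abs_of_pos (zpow_pos hγ₀0 _)]
          have hds : ‖ψ₁ s - ψ₂ s‖ ≤ dist ψ₁ ψ₂ := by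
            rw [← dist_eq_norm]
            exact BoundedContinuousFunction.dist_coe_le_dist s
          calc γ₀ ^ (s-τ) * ‖ψ₁ s - ψ₂ s‖ ≤ γ₀ ^ (s-τ) * dist ψ₁ ψ₂ :=
                mul_le_mul_of_nonneg_left hds (zpow_pos hγ₀0 _).le
            _ = dist ψ₁ ψ₂ * γ₀ ^ (s-τ) := by ring
        have hTd := hTdiff γ₀ hγ₀mem τ hτ v v (toSeq ψ₁) (toSeq ψ₂) ‖ψ₁‖ ‖ψ₂‖ (dist ψ₁ ψ₂)
          (hbddSeq ψ₁) (hbddSeq ψ₂) dist_nonneg hptw t ht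
        rw [sub_self, norm_zero, mul_zero, zero_add] at hTd
        rw [norm_smul, Real.norm_eq_abs, abs_of_pos (zpow_pos hγ₀0 _)]
        calc γ₀^(τ-t) * ‖Tm Φ P Ψ F τ v (toSeq ψ₁) t - Tm Φ P Ψ F τ v (toSeq ψ₂) t‖
            ≤ γ₀^(τ-t) * (q * dist ψ₁ ψ₂ * γ₀^(t-τ)) :=
              mul_le_mul_of_nonneg_left hTd (zpow_pos hγ₀0 _).le
          _ = (q * dist ψ₁ ψ₂) * (γ₀^(τ-t)*γ₀^(t-τ)) := by ring
          _ = q * dist ψ₁ ψ₂ := by rw [hinv t, mul_one]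
      · simp only [Tm, if_neg ht, sub_self, smul_zero, norm_zero]
        positivity
    have hq' : Real.toNNReal q < 1 := by
      have h1 : ((Real.toNNReal q : NNReal) : ℝ) < ((1 : NNReal) : ℝ) := by
        rw [Real.coe_toNNReal q hq0]
        simpa using hq1
      exact_mod_cast h1
    have hcw : ContractingWith (Real.toNNReal q) Th :=
      ⟨hq', LipschitzWith.of_dist_le_mul (by
        intro x y
        rw [Real.coe_toNNReal q hq0]
        exact hlip x y)⟩
    set ψs := ContractingWith.fixedPoint Th hcw with hψsdef
    have hfixb : Th ψs = ψs := hcw.fixedPoint_isFixedPt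
    refine ⟨toSeq ψs, ?_, ‖ψs‖, norm_nonneg _, hbddSeq ψs⟩
    intro t
    have h1 : ψs t = γ₀ ^ (τ - t) • Tm Φ P Ψ F τ v (toSeq ψs) t := by
      conv_lhs => rw [← hfixb]
      exact hThapp ψs t
    rw [htoSeqApp, h1, smul_smul, ← zpow_add₀ hγ₀0.ne',
      show t - τ + (τ - t) = 0 by ring, zpow_zero, one_smul]
  choose! φf hfp hbd using hex
  obtain ⟨w, hwdef⟩ : ∃ w : ℤ → X → X, w = fun τ v => φf τ v τ - P τ v := ⟨_, rfl⟩
  have hwapp : ∀ τ v, w τ v = φf τ v τ - P τ v := fun τ v => by rw [hwdef]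
  have hwval : ∀ τ, τ ∈ I → ∀ v, φf τ v τ = P τ v - fut Ψ F (φf τ v) τ := by
    intro τ hτ v
    have h := hfp τ hτ v τ
    rw [Tm, if_pos (le_refl τ), past, Finset.Ico_self, Finset.sum_empty, add_zero, Φid] at h
    exact h
  have hw_fut : ∀ τ, τ ∈ I → ∀ v, w τ v = - fut Ψ F (φf τ v) τ := by
    intro τ hτ v
    rw [hwapp, hwval τ hτ v]
    abel
  have bddMono : ∀ γ ∈ Set.Icc (α + δ) (β - δ), ∀ (τ : ℤ) (C : ℝ) (φ : ℤ → X), 0 ≤ C →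
      Bdd γ₀ τ C φ → Bdd γ τ C φ := by
    intro γ hγ τ C φ hC hb t ht
    refine (hb t ht).trans ?_
    refine mul_le_mul_of_nonneg_left (zpow_le_zpow_base hγ₀0 ?_ (by omega : (0:ℤ) ≤ t - τ)) hC
    rw [hγ₀def]
    exact hγ.1
  have huniq : ∀ γ ∈ Set.Icc (α + δ) (β - δ), ∀ τ, τ ∈ I → ∀ (v : X) (φ : ℤ → X) (C : ℝ),
      Bdd γ τ C φ → (∀ t, φ t = Tm Φ P Ψ F τ v φ t) → ∀ t, τ ≤ t → φ t = φf τ v t := by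
    intro γ hγ τ hτ v φ C hb hfx t ht
    obtain ⟨C₀, hC₀0, hb₀⟩ := hbd τ hτ v
    have h := hmaster γ hγ τ hτ v v φ (φf τ v) C C₀ hb (bddMono γ hγ τ C₀ _ hC₀0 hb₀)
      hfx (hfp τ hτ v) t ht
    rw [sub_self, norm_zero] at h
    have h2 : ‖φ t - φf τ v t‖ ≤ 0 := by simpa using h
    exact sub_eq_zero.mp (norm_le_zero_iff.mp h2)
  have hδ2KM : 0 < δ - 2 * K * M := by linarith
  have hwlipb : ∀ τ, τ ∈ I → ∀ v₁ v₂ : X,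
      ‖w τ v₁ - w τ v₂‖ ≤ (K ^ 2 * M / (δ - 2 * K * M)) * ‖v₁ - v₂‖ := by
    intro τ hτ v₁ v₂
    obtain ⟨C₁, hC₁, hb₁⟩ := hbd τ hτ v₁
    obtain ⟨C₂, hC₂, hb₂⟩ := hbd τ hτ v₂
    have hptD := hmaster γ₀ hγ₀mem τ hτ v₁ v₂ (φf τ v₁) (φf τ v₂) C₁ C₂ hb₁ hb₂
      (hfp τ hτ v₁) (hfp τ hτ v₂)
    have hD0 : 0 ≤ K * ‖v₁ - v₂‖ / (1 - q) := by positivity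
    have hgd : ∀ s, τ ≤ s → ‖F s (φf τ v₁ s) - F s (φf τ v₂ s)‖
        ≤ (M * (K * ‖v₁ - v₂‖ / (1 - q))) * γ₀ ^ (s - τ) := by
      intro s hs
      calc ‖F s (φf τ v₁ s) - F s (φf τ v₂ s)‖ ≤ M * ‖φf τ v₁ s - φf τ v₂ s‖ :=
            hFlip s (memI τ s hτ hs) _ _
        _ ≤ M * ((K * ‖v₁ - v₂‖ / (1 - q)) * γ₀ ^ (s - τ)) :=
            mul_le_mul_of_nonneg_left (hptD s hs) hM0
        _ = (M * (K * ‖v₁ - v₂‖ / (1 - q))) * γ₀ ^ (s - τ) := by ring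
    have hgb1 : ∀ s, τ ≤ s → ‖F s (φf τ v₁ s)‖ ≤ (M * C₁) * γ₀ ^ (s - τ) := by
      intro s hs
      calc ‖F s (φf τ v₁ s)‖ ≤ M * ‖φf τ v₁ s‖ := hFnorm s (memI τ s hτ hs) _
        _ ≤ M * (C₁ * γ₀ ^ (s - τ)) := mul_le_mul_of_nonneg_left (hb₁ s hs) hM0
        _ = (M * C₁) * γ₀ ^ (s - τ) := by ring
    have hgb2 : ∀ s, τ ≤ s → ‖F s (φf τ v₂ s)‖ ≤ (M * C₂) * γ₀ ^ (s - τ) := by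
      intro s hs
      calc ‖F s (φf τ v₂ s)‖ ≤ M * ‖φf τ v₂ s‖ := hFnorm s (memI τ s hτ hs) _
        _ ≤ M * (C₂ * γ₀ ^ (s - τ)) := mul_le_mul_of_nonneg_left (hb₂ s hs) hM0
        _ = (M * C₂) * γ₀ ^ (s - τ) := by ring
    have hsum1 : Summable (fun n : ℕ => Ψ τ (τ + n + 1) (F (τ + n) (φf τ v₁ (τ + n)))) :=
      futSummable γ₀ hγ₀mem τ hτ (fun s => F s (φf τ v₁ s)) (M * C₁) τ le_rfl
        (fun s hs => hgb1 s hs)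
    have hsum2 : Summable (fun n : ℕ => Ψ τ (τ + n + 1) (F (τ + n) (φf τ v₂ (τ + n)))) :=
      futSummable γ₀ hγ₀mem τ hτ (fun s => F s (φf τ v₂ s)) (M * C₂) τ le_rfl
        (fun s hs => hgb2 s hs)
    have hfd : fut Ψ F (φf τ v₁) τ - fut Ψ F (φf τ v₂) τ
        = ∑' n : ℕ, Ψ τ (τ + n + 1) (F (τ + n) (φf τ v₁ (τ + n)) - F (τ + n) (φf τ v₂ (τ + n))) := by
      rw [fut, fut, ← Summable.tsum_sub hsum1 hsum2]
      exact tsum_congr fun n => (map_sub (Ψ τ (τ + n + 1)) _ _).symm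
    have hfb : ‖fut Ψ F (φf τ v₁) τ - fut Ψ F (φf τ v₂) τ‖
        ≤ K * (M * (K * ‖v₁ - v₂‖ / (1 - q))) / δ * γ₀ ^ ((τ:ℤ) - τ) := by
      rw [hfd]
      exact futBound γ₀ hγ₀mem τ hτ
        (fun s => F s (φf τ v₁ s) - F s (φf τ v₂ s))
        (M * (K * ‖v₁ - v₂‖ / (1 - q))) (by positivity) τ le_rfl (fun s hs => hgd s hs)
    rw [hw_fut τ hτ v₁, hw_fut τ hτ v₂,
      show - fut Ψ F (φf τ v₁) τ - - fut Ψ F (φf τ v₂) τ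
        = -(fut Ψ F (φf τ v₁) τ - fut Ψ F (φf τ v₂) τ) by abel, norm_neg]
    refine hfb.trans ?_
    rw [sub_self, zpow_zero, mul_one]
    refine le_of_eq ?_
    rw [hqdef]
    have hne1 : (1 : ℝ) - 2 * K * M / δ ≠ 0 := by
      rw [hqdef] at h1q
      linarith
    field_simp
  have hwlip : ∀ τ, τ ∈ I →
      LipschitzWith (Real.toNNReal (K ^ 2 * M / (δ - 2 * K * M))) (w τ) := by
    intro τ hτ
    refine LipschitzWith.of_dist_le_mul ?_
    intro x y
    rw [dist_eq_norm, dist_eq_norm,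
      Real.coe_toNNReal _ (div_nonneg (by positivity) hδ2KM.le)]
    exact hwlipb τ hτ x y
  refine ⟨w, ?_, ?_, ?_, ?_⟩
  · intro τ hτ
    exact (hwlip τ hτ).continuous
  · intro γ hγ W hW
    obtain ⟨hγ0, hαγ, hγβ, _, _⟩ := hγfacts γ hγ
    have hinvγ : ∀ t s : ℤ, γ ^ (t - s) * γ ^ (s - t) = 1 := fun t s => by
      rw [← zpow_add₀ hγ0.ne']; norm_num
    constructor
    · rw [hW]
      ext ⟨τ, u⟩
      simp only [Set.mem_setOf_eq]
      constructor
      · rintro ⟨hτ, C, hC⟩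
        refine ⟨hτ, P τ u, ⟨u, rfl⟩, ?_⟩
        have hbu : ∀ t, τ ≤ t → ‖sol t τ u‖ ≤ C * γ ^ (t - τ) := by
          intro t ht
          have h := hC t ht
          calc ‖sol t τ u‖ = (γ ^ (τ - t) * ‖sol t τ u‖) * γ ^ (t - τ) := by
                rw [mul_comm (γ ^ (τ - t)) _, mul_assoc, hinvγ τ t, mul_one]
            _ ≤ C * γ ^ (t - τ) := mul_le_mul_of_nonneg_right h (zpow_pos hγ0 _).le
        have hfx := hLP γ hγ τ hτ u C hbu
        have hbφ : Bdd γ τ C (fun r => if τ ≤ r then sol r τ u else 0) := by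
          intro t ht
          simp only [if_pos ht]
          exact hbu t ht
        have hequ := huniq γ hγ τ hτ (P τ u) _ C hbφ hfx τ le_rfl
        simp only [le_refl, if_pos, hsol0] at hequ
        rw [hwapp, hPP τ hτ u, ← hequ]
        abel
      · rintro ⟨hτ, v, hvran, hu⟩
        refine ⟨hτ, ?_⟩
        obtain ⟨x, hx⟩ := hvran
        have hPv : P τ v = v := by rw [← hx]; exact hPP τ hτ x
        obtain ⟨C, hC0, hb⟩ := hbd τ hτ v
        have hu2 : u = φf τ v τ := by
          rw [hu, hwapp, hPv]
          abel
        have hrec2 : ∀ t, τ ≤ t → φf τ v (t+1) = 𝓛 t (φf τ v t) + F t (φf τ v t) := by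
          intro t ht
          rw [hfp τ hτ v (t+1), hTstep γ₀ hγ₀mem τ hτ v (φf τ v) C hb t ht, ← hfp τ hτ v t]
        have hsoleq : ∀ t, τ ≤ t → sol t τ u = φf τ v t := by
          intro t ht
          rw [hu2]
          exact hfix_sol τ (φf τ v) hrec2 t ht
        refine ⟨C, fun t ht => ?_⟩
        rw [hsoleq t ht]
        have hz : γ₀ ^ (t - τ) ≤ γ ^ (t - τ) := by
          refine zpow_le_zpow_base hγ₀0 ?_ (by omega : (0:ℤ) ≤ t - τ)
          rw [hγ₀def]
          exact hγ.1
        calc γ ^ (τ - t) * ‖φf τ v t‖ ≤ γ ^ (τ - t) * (C * γ₀ ^ (t - τ)) :=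
              mul_le_mul_of_nonneg_left (hb t ht) (zpow_pos hγ0 _).le
          _ ≤ γ ^ (τ - t) * (C * γ ^ (t - τ)) :=
              mul_le_mul_of_nonneg_left (mul_le_mul_of_nonneg_left hz hC0) (zpow_pos hγ0 _).le
          _ = C * (γ ^ (τ - t) * γ ^ (t - τ)) := by ring
          _ = C := by rw [hinvγ τ t, mul_one]
    · intro t htI2 ht1I2 u hu
      rw [hW] at hu ⊢
      simp only [Set.mem_setOf_eq] at hu ⊢
      obtain ⟨-, C, hC⟩ := hu
      refine ⟨ht1I2, γ * C, ?_⟩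
      intro s hs
      have hkey : ∀ s, t + 1 ≤ s → sol s (t+1) (𝓛 t u + 𝓝 t u + θ • 𝓝' t u) = sol s t u := by
        refine Int.le_induction
          (motive := fun s _ => sol s (t+1) (𝓛 t u + 𝓝 t u + θ • 𝓝' t u) = sol s t u) ?_ ?_
        · beta_reduce
          rw [hsol0, hsolrec t t u le_rfl, hsol0]
        · intro s hs2 ih
          beta_reduce
          beta_reduce at ih
          rw [hsolrec (t+1) s _ hs2, hsolrec t s u (by omega), ih]
      rw [hkey s hs]
      have h2 := hC s (by omega)
      have h3 : γ ^ (t + 1 - s) = γ * γ ^ (t - s) := by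
        rw [show t + 1 - s = 1 + (t - s) by ring, zpow_add₀ hγ0.ne', zpow_one]
      rw [h3, mul_assoc]
      exact mul_le_mul_of_nonneg_left h2 hγ0.le
  · intro τ hτ
    constructor
    · have h0b : Bdd γ₀ τ 0 (0 : ℤ → X) := by
        intro r hr
        simp [Bdd]
      have h00 := huniq γ₀ hγ₀mem τ hτ 0 (0 : ℤ → X) 0 h0b (fun t => (hT00 τ hτ t).symm) τ le_rfl
      rw [hwapp, ← h00]
      simp
    · intro u
      constructor
      · have hTeq : ∀ (φ : ℤ → X) t, Tm Φ P Ψ F τ u φ t = Tm Φ P Ψ F τ (P τ u) φ t := by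
          intro φ t
          rw [Tm, Tm, hPP τ hτ u]
        obtain ⟨C, hC0, hb⟩ := hbd τ hτ (P τ u)
        have heq := huniq γ₀ hγ₀mem τ hτ u (φf τ (P τ u)) C hb
          (fun t => (hfp τ hτ (P τ u) t).trans (hTeq _ t).symm) τ le_rfl
        rw [hwapp, hwapp, hPP τ hτ u, heq]
      · rw [hw_fut τ hτ u]
        refine neg_mem ?_
        obtain ⟨C, hC0, hb⟩ := hbd τ hτ u
        have hgb : ∀ s, τ ≤ s → ‖F s (φf τ u s)‖ ≤ (M * C) * γ₀ ^ (s - τ) := by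
          intro s hs
          calc ‖F s (φf τ u s)‖ ≤ M * ‖φf τ u s‖ := hFnorm s (memI τ s hτ hs) _
            _ ≤ M * (C * γ₀ ^ (s - τ)) := mul_le_mul_of_nonneg_left (hb s hs) hM0
            _ = (M * C) * γ₀ ^ (s - τ) := by ring
        have hsum : Summable (fun n : ℕ => Ψ τ (τ + n + 1) (F (τ + n) (φf τ u (τ + n)))) :=
          futSummable γ₀ hγ₀mem τ hτ (fun s => F s (φf τ u s)) (M * C) τ le_rfl
            (fun s hs => hgb s hs)
        have hmem : ∀ m : ℕ, (∑ n ∈ Finset.range m, Ψ τ (τ + n + 1) (F (τ + n) (φf τ u (τ + n))))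
            ∈ LinearMap.ker (P τ : X →ₗ[ℝ] X) := fun m =>
          sum_mem fun n _ => hΨker τ (τ + n + 1) (by omega) hτ (memI τ _ hτ (by omega)) _
        have hcl : IsClosed ((LinearMap.ker (P τ : X →ₗ[ℝ] X) : Submodule ℝ X) : Set X) :=
          ContinuousLinearMap.isClosed_ker (P τ)
        rw [fut]
        exact hcl.mem_of_tendsto hsum.hasSum.tendsto_sum_nat (Filter.Eventually.of_forall hmem)
  · intro τ hτ
    exact hwlip τ hτ
end

section
/- Let X be a Banach space and consider on 𝕀 = ℤ the difference equation u_{t+1} = 𝓛_t u_t + 𝓝_t(u_t) + θ 𝓝̄_t(u_t) with parameter θ ∈ ℝ, where: (H1) 𝓛_t ∈ L(X) for t ∈ ℤ, there are projections P_t ∈ L(X) and reals K ≥ 1, 0 < α < β such that P_{t+1}𝓛_t = 𝓛_t P_t, the restriction 𝓛_t|_{ker P_t} : ker P_t → ker P_{t+1} is an isomorphism for all t ∈ ℤ, ‖Φ(t,s)P_s‖ ≤ K α^{t−s} for all s ≤ t, and ‖(Φ(t,s)|_{ker P_s})^{−1}(id_X − P_t)‖ ≤ K β^{s−t} for all s ≤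 t, where Φ(t,s) := 𝓛_{t−1}⋯𝓛_s for s < t and Φ(t,t) := id_X; (H2) 𝓝_t, 𝓝̄_t : X → X satisfy 𝓝_t(0) = 𝓝̄_t(0) = 0, L := sup_{t∈ℤ} Lip 𝓝_t < ∞ and L̄ := sup_{t∈ℤ} Lip 𝓝̄_t < ∞. Fix δ ∈ (4KL, (β−α)/2] and suppose additionally L < δ/(6K). Then for every θ ∈ ℝ with L̄|θ| ≤ L and every γ ∈ [α+δ, β−δ], the zero sequence is the only entire solution of the equation that is γ-bounded: if (φ_t)_{t∈ℤ} in X satisfies φ_{t+1} = 𝓛_t φ_t + 𝓝_t(φ_t) + θ𝓝̄_t(φ_t) for all t ∈ ℤ and sup_{t∈ℤ} γ^{−t}‖φ_t‖ < ∞, then φ_t = 0 for all t ∈ ℤ. -/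
/-!
Write the equation as `φ (t + 1) = 𝓛 t (φ t) + g t` with `‖g t‖ ≤ 2L‖φ t‖`, and suppose
`‖φ t‖ ≤ M γ^t` for all `t`. Variation of constants expresses `P t (φ t)` through `φ s` for
`s ≤ t`, and, after applying the inverses `Ψ` on the unstable spaces, `φ t - P t (φ t)` through
`φ s` for `s ≥ t`. The dichotomy estimates turn both expressions into geometric sums with ratios
`α / γ` and `γ / β`; letting `s → ∓∞` leaves `‖φ t‖ ≤ (4KL/δ) M γ^t`. As `4KL < δ`, iterating
this contraction of the admissible constants `M` forces `φ = 0`.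
-/

open Set

structure IsEvolutionOperator {R M : Type*} [Semiring R] [AddCommMonoid M] [Module R M]
    [TopologicalSpace M] (𝓛 : ℤ → M →L[R] M) (Φ : ℤ → ℤ → M →L[R] M) : Prop where
  self : ∀ t, Φ t t = ContinuousLinearMap.id R M
  succ : ∀ s t, s ≤ t → Φ (t + 1) s = (𝓛 t).comp (Φ t s)

namespace IsEvolutionOperator

variable {R M : Type*} [Semiring R] [AddCommMonoid M] [Module R M] [TopologicalSpace M]
  {𝓛 : ℤ → M →L[R] M} {Φ : ℤ → ℤ → M →L[R] M}

theorem self_apply (hΦ : IsEvolutionOperator 𝓛 Φ) (t : ℤ) (x : M) : Φ t t x = x := by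
  simp [hΦ.self]

theorem succ_apply (hΦ : IsEvolutionOperator 𝓛 Φ) {s t : ℤ} (hst : s ≤ t) (x : M) :
    Φ (t + 1) s x = 𝓛 t (Φ t s x) := by
  simp [hΦ.succ s t hst]

theorem apply_apply (hΦ : IsEvolutionOperator 𝓛 Φ) {a b c : ℤ} (hab : a ≤ b) (hbc : b ≤ c)
    (x : M) : Φ c b (Φ b a x) = Φ c a x := by
  induction c, hbc using Int.leInduction with
  | base => exact hΦ.self_apply b _
  | succ c hbc ih => rw [hΦ.succ_apply hbc, hΦ.succ_apply (hab.trans hbc), ih]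

theorem commute_apply (hΦ : IsEvolutionOperator 𝓛 Φ) {P : ℤ → M →L[R] M}
    (hcomm : ∀ t, (P (t + 1)).comp (𝓛 t) = (𝓛 t).comp (P t)) {s t : ℤ} (hst : s ≤ t) (x : M) :
    P t (Φ t s x) = Φ t s (P s x) := by
  induction t, hst using Int.leInduction with
  | base => rw [hΦ.self_apply, hΦ.self_apply]
  | succ t hst ih =>
    rw [hΦ.succ_apply hst, hΦ.succ_apply hst, ← ih, ← ContinuousLinearMap.comp_apply, hcomm,
      ContinuousLinearMap.comp_apply]

theorem bijOn_ker (hΦ : IsEvolutionOperator 𝓛 Φ) {P : ℤ → M →L[R] M}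
    (hiso : ∀ t, BijOn (𝓛 t) (LinearMap.ker (P t : M →ₗ[R] M) : Set M)
      (LinearMap.ker (P (t + 1) : M →ₗ[R] M) : Set M))
    {s t : ℤ} (hst : s ≤ t) :
    BijOn (Φ t s) (LinearMap.ker (P s : M →ₗ[R] M) : Set M)
      (LinearMap.ker (P t : M →ₗ[R] M) : Set M) := by
  induction t, hst using Int.leInduction with
  | base =>
    rw [show ⇑(Φ s s) = id from funext (hΦ.self_apply s)]
    exact bijOn_id _
  | succ t hst ih =>
    rw [show ⇑(Φ (t + 1) s) = 𝓛 t ∘ Φ t s from funext (hΦ.succ_apply hst)]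
    exact (hiso t).comp ih

theorem variation_of_constants (hΦ : IsEvolutionOperator 𝓛 Φ) {u g : ℤ → M}
    (hu : ∀ t, u (t + 1) = 𝓛 t (u t) + g t) {s t : ℤ} (hst : s ≤ t) :
    u t = Φ t s (u s) + ∑ r ∈ Finset.Ico s t, Φ t (r + 1) (g r) := by
  induction t, hst using Int.leInduction with
  | base => simp [hΦ.self_apply]
  | succ t hst ih =>
    have hstep : ∀ r ∈ Finset.Ico s t, Φ (t + 1) (r + 1) (g r) = 𝓛 t (Φ t (r + 1) (g r)) :=
      fun r hr ↦ hΦ.succ_apply (by grind) _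
    rw [← Finset.sum_Ico_add_eq_sum_Ico_add_one hst, Finset.sum_congr rfl hstep, hu t, ih,
      hΦ.succ_apply hst, hΦ.self_apply, map_add, map_sum, add_assoc]

end IsEvolutionOperator

section GeometricSums

theorem sum_zpow_le_of_injOn {ι : Type*} {q : ℝ} (hq0 : 0 ≤ q) (hq1 : q < 1) (S : Finset ι)
    {f : ι → ℤ} (hf : InjOn f S) (hf0 : ∀ i ∈ S, 0 ≤ f i) :
    ∑ i ∈ S, q ^ f i ≤ (1 - q)⁻¹ := by
  have hinj : InjOn (fun i ↦ (f i).toNat) S := fun i hi j hj hij ↦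
    hf hi hj (by have := hf0 i hi; have := hf0 j hj; grind)
  calc ∑ i ∈ S, q ^ f i = ∑ k ∈ S.image (fun i ↦ (f i).toNat), q ^ k := by
        rw [Finset.sum_image hinj]
        refine Finset.sum_congr rfl fun i hi ↦ ?_
        rw [← zpow_natCast, Int.toNat_of_nonneg (hf0 i hi)]
    _ ≤ ∑' k, q ^ k :=
        (summable_geometric_of_lt_one hq0 hq1).sum_le_tsum _ fun k _ ↦ pow_nonneg hq0 k
    _ = (1 - q)⁻¹ := tsum_geometric_of_lt_one hq0 hq1

variable {α β γ : ℝ}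

theorem sum_Ico_zpow_mul_zpow_le_of_lt (hα : 0 ≤ α) (hαγ : α < γ) (s t : ℤ) :
    ∑ r ∈ Finset.Ico s t, α ^ (t - 1 - r) * γ ^ r ≤ γ ^ t / (γ - α) := by
  have hγ : 0 < γ := hα.trans_lt hαγ
  have hterm : ∀ r, α ^ (t - 1 - r) * γ ^ r = γ ^ (t - 1) * (α / γ) ^ (t - 1 - r) := by
    intro r
    rw [div_zpow, zpow_sub₀ hγ.ne' (t - 1)]
    field_simp
  have hsum := sum_zpow_le_of_injOn (div_nonneg hα hγ.le) ((div_lt_one hγ).2 hαγ)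
    (Finset.Ico s t) (f := fun r ↦ t - 1 - r) (fun r _ r' _ h ↦ by grind)
    (fun r hr ↦ by grind)
  calc ∑ r ∈ Finset.Ico s t, α ^ (t - 1 - r) * γ ^ r
      = γ ^ (t - 1) * ∑ r ∈ Finset.Ico s t, (α / γ) ^ (t - 1 - r) := by
        simp only [hterm, Finset.mul_sum]
    _ ≤ γ ^ (t - 1) * (1 - α / γ)⁻¹ := by gcongr
    _ = γ ^ t / (γ - α) := by
        rw [zpow_sub_one₀ hγ.ne']
        field_simp

theorem sum_Ico_zpow_mul_zpow_le_of_gt (hγ : 0 < γ) (hγβ : γ < β) (t s : ℤ) :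
    ∑ r ∈ Finset.Ico t s, β ^ (t - 1 - r) * γ ^ r ≤ γ ^ t / (β - γ) := by
  have hβ : 0 < β := hγ.trans hγβ
  have hterm : ∀ r, β ^ (t - 1 - r) * γ ^ r = γ ^ t / β * (γ / β) ^ (r - t) := by
    intro r
    rw [show t - 1 - r = -(r - t) - 1 by ring, zpow_sub_one₀ hβ.ne', zpow_neg, div_zpow,
      zpow_sub₀ hγ.ne' r t]
    field_simp
  have hsum := sum_zpow_le_of_injOn (div_nonneg hγ.le hβ.le) ((div_lt_one hβ).2 hγβ)
    (Finset.Ico t s) (f := fun r ↦ r - t) (fun r _ r' _ h ↦ by grind)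
    (fun r hr ↦ by grind)
  calc ∑ r ∈ Finset.Ico t s, β ^ (t - 1 - r) * γ ^ r
      = γ ^ t / β * ∑ r ∈ Finset.Ico t s, (γ / β) ^ (r - t) := by
        simp only [hterm, Finset.mul_sum]
    _ ≤ γ ^ t / β * (1 - γ / β)⁻¹ := by gcongr
    _ = γ ^ t / (β - γ) := by
        have : β - γ ≠ 0 := by linarith
        rw [one_sub_div hβ.ne']
        field_simp

theorem le_of_forall_le_mul_pow_add {x a b q : ℝ} (hq0 : 0 ≤ q) (hq1 : q < 1)
    (h : ∀ n : ℕ, x ≤ a * q ^ n + b) : x ≤ b :=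
  ge_of_tendsto' (by simpa using
    ((tendsto_pow_atTop_nhds_zero_of_lt_one hq0 hq1).const_mul a).add_const b) h

end GeometricSums

/-- `Ψ s t` stands for `(Φ t s|_{ker P s})⁻¹ ∘ (id - P t)`. -/
structure ExponentialDichotomy {𝕜 X : Type*} [NontriviallyNormedField 𝕜] [NormedAddCommGroup X]
    [NormedSpace 𝕜 X] (𝓛 P : ℤ → X →L[𝕜] X) (Φ Ψ : ℤ → ℤ → X →L[𝕜] X) (K α β : ℝ) : Prop where
  isEvolutionOperator : IsEvolutionOperator 𝓛 Φ
  proj_comp : ∀ t, (P (t + 1)).comp (𝓛 t) = (𝓛 t).comp (P t)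
  bijOn_ker : ∀ t, BijOn (𝓛 t) (LinearMap.ker (P t : X →ₗ[𝕜] X) : Set X)
    (LinearMap.ker (P (t + 1) : X →ₗ[𝕜] X) : Set X)
  inv_mem_ker : ∀ s t, s ≤ t → ∀ x, Ψ s t x ∈ LinearMap.ker (P s : X →ₗ[𝕜] X)
  evolution_inv : ∀ s t, s ≤ t → ∀ x, Φ t s (Ψ s t x) = x - P t x
  norm_stable_le : ∀ s t, s ≤ t → ‖(Φ t s).comp (P s)‖ ≤ K * α ^ (t - s)
  norm_inv_le : ∀ s t, s ≤ t → ‖Ψ s t‖ ≤ K * β ^ (s - t)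

namespace ExponentialDichotomy

variable {𝕜 X : Type*} [NontriviallyNormedField 𝕜] [NormedAddCommGroup X] [NormedSpace 𝕜 X]
  {𝓛 P : ℤ → X →L[𝕜] X} {Φ Ψ : ℤ → ℤ → X →L[𝕜] X} {K α β : ℝ}

theorem const_nonneg (hd : ExponentialDichotomy 𝓛 P Φ Ψ K α β) : 0 ≤ K := by
  simpa using (norm_nonneg _).trans (hd.norm_stable_le 0 0 le_rfl)

theorem inv_self_apply (hd : ExponentialDichotomy 𝓛 P Φ Ψ K α β) (t : ℤ) (x : X) :
    Ψ t t x = x - P t x := by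
  simpa [hd.isEvolutionOperator.self_apply] using hd.evolution_inv t t le_rfl x

theorem inv_evolution_apply (hd : ExponentialDichotomy 𝓛 P Φ Ψ K α β) {t u s : ℤ}
    (htu : t ≤ u) (hus : u ≤ s) (x : X) : Ψ t s (Φ s u x) = Ψ t u x := by
  have hΦ := hd.isEvolutionOperator
  have hts := htu.trans hus
  refine (hΦ.bijOn_ker hd.bijOn_ker hts).injOn (hd.inv_mem_ker t s hts _)
    (hd.inv_mem_ker t u htu _) ?_
  rw [hd.evolution_inv t s hts, ← hΦ.apply_apply htu hus, hd.evolution_inv t u htu, map_sub,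
    hΦ.commute_apply hd.proj_comp hus]

variable {u g : ℤ → X}

theorem proj_eq (hd : ExponentialDichotomy 𝓛 P Φ Ψ K α β)
    (hu : ∀ t, u (t + 1) = 𝓛 t (u t) + g t) {s t : ℤ} (hst : s ≤ t) :
    P t (u t) = Φ t s (P s (u s)) + ∑ r ∈ Finset.Ico s t, Φ t (r + 1) (P (r + 1) (g r)) := by
  have hΦ := hd.isEvolutionOperator
  rw [hΦ.variation_of_constants hu hst, map_add, map_sum, hΦ.commute_apply hd.proj_comp hst]
  congr 1
  exact Finset.sum_congr rfl fun r hr ↦ hΦ.commute_apply hd.proj_comp (by grind) _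

theorem sub_proj_eq (hd : ExponentialDichotomy 𝓛 P Φ Ψ K α β)
    (hu : ∀ t, u (t + 1) = 𝓛 t (u t) + g t) {t s : ℤ} (hts : t ≤ s) :
    u t - P t (u t) = Ψ t s (u s) - ∑ r ∈ Finset.Ico t s, Ψ t (r + 1) (g r) := by
  rw [hd.isEvolutionOperator.variation_of_constants hu hts, map_add, map_sum,
    hd.inv_evolution_apply le_rfl hts, hd.inv_self_apply,
    Finset.sum_congr rfl fun r hr ↦ hd.inv_evolution_apply (by grind) (by grind) _,
    add_sub_cancel_right]

variable {γ M N : ℝ}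

theorem norm_proj_le (hd : ExponentialDichotomy 𝓛 P Φ Ψ K α β) (hα : 0 ≤ α) (hαγ : α < γ)
    (hu : ∀ t, u (t + 1) = 𝓛 t (u t) + g t) (huM : ∀ r, ‖u r‖ ≤ M * γ ^ r)
    (hgN : ∀ r, ‖g r‖ ≤ N * γ ^ r) {s t : ℤ} (hst : s ≤ t) :
    ‖P t (u t)‖ ≤ K * M * γ ^ t * (α / γ) ^ (t - s) + K * N * γ ^ t / (γ - α) := by
  have hγ : 0 < γ := hα.trans_lt hαγ
  have hK := hd.const_nonneg
  have hN : 0 ≤ N := by simpa using (norm_nonneg _).trans (hgN 0)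
  have hterm : ∀ r ∈ Finset.Ico s t,
      ‖Φ t (r + 1) (P (r + 1) (g r))‖ ≤ K * N * (α ^ (t - 1 - r) * γ ^ r) := fun r hr ↦ by
    have h := ((Φ t (r + 1)).comp (P (r + 1))).le_of_opNorm_le_of_le
      (hd.norm_stable_le (r + 1) t (by grind)) (hgN r)
    rw [show t - (r + 1) = t - 1 - r by ring] at h
    exact h.trans_eq (by ring)
  rw [hd.proj_eq hu hst]
  calc ‖Φ t s (P s (u s)) + ∑ r ∈ Finset.Ico s t, Φ t (r + 1) (P (r + 1) (g r))‖
      ≤ K * α ^ (t - s) * (M * γ ^ s) + ∑ r ∈ Finset.Ico s t, K * N * (α ^ (t - 1 - r) * γ ^ r) :=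
        (norm_add_le _ _).trans (add_le_add
          (((Φ t s).comp (P s)).le_of_opNorm_le_of_le (hd.norm_stable_le s t hst) (huM s))
          ((norm_sum_le _ _).trans (Finset.sum_le_sum hterm)))
    _ ≤ K * α ^ (t - s) * (M * γ ^ s) + K * N * (γ ^ t / (γ - α)) := by
        rw [← Finset.mul_sum]
        gcongr
        exact sum_Ico_zpow_mul_zpow_le_of_lt hα hαγ s t
    _ = K * M * γ ^ t * (α / γ) ^ (t - s) + K * N * γ ^ t / (γ - α) := by
        rw [div_zpow, zpow_sub₀ hγ.ne' t s]
        field_simp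

theorem norm_sub_proj_le (hd : ExponentialDichotomy 𝓛 P Φ Ψ K α β) (hγ : 0 < γ) (hγβ : γ < β)
    (hu : ∀ t, u (t + 1) = 𝓛 t (u t) + g t) (huM : ∀ r, ‖u r‖ ≤ M * γ ^ r)
    (hgN : ∀ r, ‖g r‖ ≤ N * γ ^ r) {t s : ℤ} (hts : t ≤ s) :
    ‖u t - P t (u t)‖ ≤ K * M * γ ^ t * (γ / β) ^ (s - t) + K * N * γ ^ t / (β - γ) := by
  have hβ : 0 < β := hγ.trans hγβ
  have hK := hd.const_nonneg
  have hN : 0 ≤ N := by simpa using (norm_nonneg _).trans (hgN 0)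
  have hterm : ∀ r ∈ Finset.Ico t s,
      ‖Ψ t (r + 1) (g r)‖ ≤ K * N * (β ^ (t - 1 - r) * γ ^ r) := fun r hr ↦ by
    have h := (Ψ t (r + 1)).le_of_opNorm_le_of_le (hd.norm_inv_le t (r + 1) (by grind)) (hgN r)
    rw [show t - (r + 1) = t - 1 - r by ring] at h
    exact h.trans_eq (by ring)
  rw [hd.sub_proj_eq hu hts]
  calc ‖Ψ t s (u s) - ∑ r ∈ Finset.Ico t s, Ψ t (r + 1) (g r)‖
      ≤ K * β ^ (t - s) * (M * γ ^ s) + ∑ r ∈ Finset.Ico t s, K * N * (β ^ (t - 1 - r) * γ ^ r) :=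
        (norm_sub_le _ _).trans (add_le_add
          ((Ψ t s).le_of_opNorm_le_of_le (hd.norm_inv_le t s hts) (huM s))
          ((norm_sum_le _ _).trans (Finset.sum_le_sum hterm)))
    _ ≤ K * β ^ (t - s) * (M * γ ^ s) + K * N * (γ ^ t / (β - γ)) := by
        rw [← Finset.mul_sum]
        gcongr
        exact sum_Ico_zpow_mul_zpow_le_of_gt hγ hγβ t s
    _ = K * M * γ ^ t * (γ / β) ^ (s - t) + K * N * γ ^ t / (β - γ) := by
        rw [div_zpow, zpow_sub₀ hγ.ne' s t, zpow_sub₀ hβ.ne' t s, zpow_sub₀ hβ.ne' s t]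
        field_simp

theorem norm_le (hd : ExponentialDichotomy 𝓛 P Φ Ψ K α β) (hα : 0 ≤ α) {δ : ℝ} (hδ : 0 < δ)
    (hαγ : α + δ ≤ γ) (hγβ : γ ≤ β - δ) (hu : ∀ t, u (t + 1) = 𝓛 t (u t) + g t)
    (huM : ∀ r, ‖u r‖ ≤ M * γ ^ r) (hgN : ∀ r, ‖g r‖ ≤ N * γ ^ r) (t : ℤ) :
    ‖u t‖ ≤ 2 * K * N / δ * γ ^ t := by
  have hγ : 0 < γ := by linarith
  have hβ : 0 < β := by linarith
  have hKN : 0 ≤ K * N * γ ^ t := by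
    have hN : 0 ≤ N := by simpa using (norm_nonneg _).trans (hgN 0)
    have := hd.const_nonneg
    positivity
  have hstable : ‖P t (u t)‖ ≤ K * N * γ ^ t / (γ - α) :=
    le_of_forall_le_mul_pow_add (div_nonneg hα hγ.le) ((div_lt_one hγ).2 (by linarith))
      fun n ↦ by simpa using hd.norm_proj_le hα (by linarith) hu huM hgN (s := t - n) (t := t) (by omega)
  have hunstable : ‖u t - P t (u t)‖ ≤ K * N * γ ^ t / (β - γ) :=
    le_of_forall_le_mul_pow_add (div_nonneg hγ.le hβ.le) ((div_lt_one hβ).2 (by linarith))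
      fun n ↦ by simpa using hd.norm_sub_proj_le hγ (by linarith) hu huM hgN (t := t) (s := t + n) (by omega)
  calc ‖u t‖ ≤ ‖P t (u t)‖ + ‖u t - P t (u t)‖ := norm_le_norm_add_norm_sub' _ _
    _ ≤ K * N * γ ^ t / δ + K * N * γ ^ t / δ := by
        gcongr
        · exact hstable.trans (div_le_div_of_nonneg_left hKN hδ (by linarith))
        · exact hunstable.trans (div_le_div_of_nonneg_left hKN hδ (by linarith))
    _ = 2 * K * N / δ * γ ^ t := by ring

end ExponentialDichotomy

theorem norm_add_smul_le_of_lipschitzWith {E F : Type*} [SeminormedAddCommGroup E]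
    [SeminormedAddCommGroup F] [NormedSpace ℝ F] {f f' : E → F} {L L' θ : ℝ} (hL : 0 ≤ L)
    (hL' : 0 ≤ L') (hf : LipschitzWith L.toNNReal f) (hf' : LipschitzWith L'.toNNReal f')
    (hf0 : f 0 = 0) (hf'0 : f' 0 = 0) (hθ : L' * |θ| ≤ L) (x : E) :
    ‖f x + θ • f' x‖ ≤ 2 * L * ‖x‖ := by
  have h := hf.norm_le_mul hf0 x
  have h' := hf'.norm_le_mul hf'0 x
  rw [Real.coe_toNNReal _ hL] at h
  rw [Real.coe_toNNReal _ hL'] at h'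
  calc ‖f x + θ • f' x‖ ≤ ‖f x‖ + |θ| * ‖f' x‖ := by
        simpa [norm_smul] using norm_add_le (f x) (θ • f' x)
    _ ≤ L * ‖x‖ + |θ| * (L' * ‖x‖) := by gcongr
    _ ≤ 2 * L * ‖x‖ := by nlinarith [norm_nonneg x, abs_nonneg θ]

theorem eq_zero_of_bound_contracts {ι E : Type*} [NormedAddCommGroup E] {u : ι → E}
    {w : ι → ℝ} {c : ℝ} (hc0 : 0 ≤ c) (hc1 : c < 1) (hbdd : ∃ M, ∀ i, ‖u i‖ ≤ M * w i)
    (hcontract : ∀ M, (∀ i, ‖u i‖ ≤ M * w i) → ∀ i, ‖u i‖ ≤ c * M * w i) (i : ι) : u i = 0 := by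
  obtain ⟨M, hM⟩ := hbdd
  have hpow : ∀ n : ℕ, ∀ i, ‖u i‖ ≤ c ^ n * M * w i := by
    intro n
    induction n with
    | zero => simpa using hM
    | succ n ih => simpa only [pow_succ', mul_assoc] using hcontract _ ih
  refine norm_le_zero_iff.1 (le_of_forall_le_mul_pow_add (a := M * w i) hc0 hc1 fun n ↦ ?_)
  linarith [hpow n i]

theorem stmt_17_general {X : Type*} [NormedAddCommGroup X] [NormedSpace ℝ X]
    (𝓛 : ℤ → X →L[ℝ] X) (P : ℤ → X →L[ℝ] X)
    (K α β : ℝ) (hα : 0 < α)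
    -- (H1): invariant family of projections and exponential dichotomy
    (hcomm : ∀ t : ℤ, (P (t + 1)).comp (𝓛 t) = (𝓛 t).comp (P t))
    (hiso : ∀ t : ℤ,
      Set.BijOn (𝓛 t) (LinearMap.ker (P t : X →ₗ[ℝ] X) : Set X) (LinearMap.ker (P (t + 1) : X →ₗ[ℝ] X) : Set X))
    (Φ : ℤ → ℤ → X →L[ℝ] X)
    (hΦ0 : ∀ t, Φ t t = ContinuousLinearMap.id ℝ X)
    (hΦrec : ∀ s t, s ≤ t → Φ (t + 1) s = (𝓛 t).comp (Φ t s))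
    (hdich₁ : ∀ s t, s ≤ t → ‖(Φ t s).comp (P s)‖ ≤ K * α ^ (t - s))
    (Ψ : ℤ → ℤ → X →L[ℝ] X)  -- `Ψ s t = (Φ(t,s)|_{ker P_s})⁻¹ (id − P_t)`
    (hΨker : ∀ s t, s ≤ t → ∀ x, Ψ s t x ∈ LinearMap.ker (P s : X →ₗ[ℝ] X))
    (hΨinv : ∀ s t, s ≤ t → ∀ x, Φ t s (Ψ s t x) = x - P t x)
    (hdich₂ : ∀ s t, s ≤ t → ‖Ψ s t‖ ≤ K * β ^ (s - t))
    -- (H2): nonlinearities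
    (𝓝 𝓝' : ℤ → X → X)
    (h𝓝0 : ∀ t : ℤ, 𝓝 t 0 = 0 ∧ 𝓝' t 0 = 0)
    (L L' : ℝ) (hL0 : 0 ≤ L) (hL'0 : 0 ≤ L')
    (hLip : ∀ t : ℤ, LipschitzWith (Real.toNNReal L) (𝓝 t))
    (hLip' : ∀ t : ℤ, LipschitzWith (Real.toNNReal L') (𝓝' t))
    -- spectral gap and strengthened smallness
    (δ : ℝ) (hδ₁ : 4 * K * L < δ) :
    ∀ θ : ℝ, L' * |θ| ≤ L →
      ∀ γ ∈ Set.Icc (α + δ) (β - δ),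
        ∀ φ : ℤ → X,
          (∀ t : ℤ, φ (t + 1) = 𝓛 t (φ t) + 𝓝 t (φ t) + θ • 𝓝' t (φ t)) →
          (∃ C : ℝ, ∀ t : ℤ, γ ^ (-t) * ‖φ t‖ ≤ C) →
          ∀ t : ℤ, φ t = 0 := by
  intro θ hθ γ ⟨hαγ, hγβ⟩ φ hφ ⟨C, hC⟩
  have hd : ExponentialDichotomy 𝓛 P Φ Ψ K α β :=
    ⟨⟨hΦ0, hΦrec⟩, hcomm, hiso, hΨker, hΨinv, hdich₁, hdich₂⟩
  have hK := hd.const_nonneg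
  have hδ : 0 < δ := lt_of_le_of_lt (by positivity) hδ₁
  have hγ : 0 < γ := by linarith
  have hnonlin : ∀ t x, ‖𝓝 t x + θ • 𝓝' t x‖ ≤ 2 * L * ‖x‖ := fun t ↦
    norm_add_smul_le_of_lipschitzWith hL0 hL'0 (hLip t) (hLip' t) (h𝓝0 t).1 (h𝓝0 t).2 hθ
  refine eq_zero_of_bound_contracts (w := (γ ^ ·)) (c := 4 * K * L / δ) (by positivity)
    ((div_lt_one hδ).2 hδ₁) ⟨C, fun t ↦ ?_⟩ fun M hM t ↦ ?_
  · have h := hC t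
    rw [zpow_neg, inv_mul_le_iff₀ (zpow_pos hγ t)] at h
    exact h.trans_eq (mul_comm _ _)
  · calc ‖φ t‖ ≤ 2 * K * (2 * L * M) / δ * γ ^ t :=
          hd.norm_le hα.le hδ hαγ hγβ (fun t ↦ by rw [hφ, add_assoc]) hM
            (fun r ↦ (hnonlin r (φ r)).trans <|
              (mul_le_mul_of_nonneg_left (hM r) (by positivity)).trans_eq (by ring)) t
      _ = 4 * K * L / δ * M * γ ^ t := by ring

/-- triviality of bounded entire solutions, Theorem A.1(c):
for the parameter-dependent semilinear difference equation
`u_{t+1} = 𝓛_t u_t + 𝓝_t(u_t) + θ𝓝̄_t(u_t)` on `ℤ`, with an exponential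
dichotomy (H1), globally Lipschitz nonlinearities vanishing at `0` (H2),
`δ ∈ (4KL, (β−α)/2]` and additionally `L < δ/(6K)`, the zero sequence is the
only `γ`-bounded entire solution for every `γ ∈ [α+δ, β−δ]` and every
admissible parameter `θ`. -/
theorem stmt_17 {X : Type*} [NormedAddCommGroup X] [NormedSpace ℝ X]
    [CompleteSpace X]
    (𝓛 : ℤ → X →L[ℝ] X) (P : ℤ → X →L[ℝ] X)
    (K α β : ℝ) (hK : 1 ≤ K) (hα : 0 < α) (hαβ : α < β)
    -- (H1): invariant family of projections and exponential dichotomy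
    (hP : ∀ t : ℤ, (P t).comp (P t) = P t)
    (hcomm : ∀ t : ℤ, (P (t + 1)).comp (𝓛 t) = (𝓛 t).comp (P t))
    (hiso : ∀ t : ℤ,
      Set.BijOn (𝓛 t) (LinearMap.ker (P t : X →ₗ[ℝ] X) : Set X) (LinearMap.ker (P (t + 1) : X →ₗ[ℝ] X) : Set X))
    (Φ : ℤ → ℤ → X →L[ℝ] X)
    (hΦ0 : ∀ t, Φ t t = ContinuousLinearMap.id ℝ X)
    (hΦrec : ∀ s t, s ≤ t → Φ (t + 1) s = (𝓛 t).comp (Φ t s))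
    (hdich₁ : ∀ s t, s ≤ t → ‖(Φ t s).comp (P s)‖ ≤ K * α ^ (t - s))
    (Ψ : ℤ → ℤ → X →L[ℝ] X)  -- `Ψ s t = (Φ(t,s)|_{ker P_s})⁻¹ (id − P_t)`
    (hΨker : ∀ s t, s ≤ t → ∀ x, Ψ s t x ∈ LinearMap.ker (P s : X →ₗ[ℝ] X))
    (hΨinv : ∀ s t, s ≤ t → ∀ x, Φ t s (Ψ s t x) = x - P t x)
    (hdich₂ : ∀ s t, s ≤ t → ‖Ψ s t‖ ≤ K * β ^ (s - t))
    -- (H2): nonlinearities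
    (𝓝 𝓝' : ℤ → X → X)
    (h𝓝0 : ∀ t : ℤ, 𝓝 t 0 = 0 ∧ 𝓝' t 0 = 0)
    (L L' : ℝ) (hL0 : 0 ≤ L) (hL'0 : 0 ≤ L')
    (hLip : ∀ t : ℤ, LipschitzWith (Real.toNNReal L) (𝓝 t))
    (hLip' : ∀ t : ℤ, LipschitzWith (Real.toNNReal L') (𝓝' t))
    -- spectral gap and strengthened smallness
    (δ : ℝ) (hδ₁ : 4 * K * L < δ) (hδ₂ : δ ≤ (β - α) / 2)
    (hsmall : L < δ / (6 * K)) :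
    ∀ θ : ℝ, L' * |θ| ≤ L →
      ∀ γ ∈ Set.Icc (α + δ) (β - δ),
        ∀ φ : ℤ → X,
          (∀ t : ℤ, φ (t + 1) = 𝓛 t (φ t) + 𝓝 t (φ t) + θ • 𝓝' t (φ t)) →
          (∃ C : ℝ, ∀ t : ℤ, γ ^ (-t) * ‖φ t‖ ≤ C) →
          ∀ t : ℤ, φ t = 0 :=
  stmt_17_general 𝓛 P K α β hα hcomm hiso Φ hΦ0 hΦrec hdich₁ Ψ hΨker hΨinv hdich₂ 𝓝 𝓝' h𝓝0 L L' hL0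
    hL'0 hLip hLip' δ hδ₁
end
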